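/- arXiv:1802.10004 — 11 statements merged into one kernel-verified Lean document; each statement's English description precedes it below -/
import Mathlib

section
/- For every n ≥ 2 and every even integer d ≥ 2, the SONC cone C_{n,d} is not closed under multiplication: there exist polynomials p₁, p₂ ∈ C_{n,d} such that the product p₁·p₂ does not belong to C_{n,2d}. -/
open MvPolynomial Finset
open scoped Classical

noncomputable section

/-- A circuit polynomial in `n` variables. -/
def IsCircuitPoly (n : ℕ) (f : MvPolynomial (Fin n) ℝ) : Prop :=
  ∃ (r : ℕ) (α : Fin (r + 1) → (Fin n →₀ ℕ)) (β : Fin n →₀ ℕ)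
    (cf : Fin (r + 1) → ℝ) (c : ℝ) (lam : Fin (r + 1) → ℝ),
    r ≤ n ∧
    (∀ j, 0 < cf j) ∧
    (∀ j i, Even (α j i)) ∧
    AffineIndependent ℝ (fun j (i : Fin n) => ((α j i : ℕ) : ℝ)) ∧
    (∀ j, 0 < lam j) ∧ (∑ j, lam j) = 1 ∧
    (∀ i, ((β i : ℕ) : ℝ) = ∑ j, lam j * ((α j i : ℕ) : ℝ)) ∧
    f = (∑ j, monomial (α j) (cf j)) + monomial β c

/-- A nonnegative circuit polynomial. -/
def IsNNCircuit (n : ℕ) (f : MvPolynomial (Fin n) ℝ) : Prop :=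
  IsCircuitPoly n f ∧ ∀ x : Fin n → ℝ, 0 ≤ eval x f

/-- A sum of nonnegative circuit polynomials (no degree bound). -/
def IsSONC (n : ℕ) (f : MvPolynomial (Fin n) ℝ) : Prop :=
  ∃ (k : ℕ) (μ : Fin k → ℝ) (p : Fin k → MvPolynomial (Fin n) ℝ),
    (∀ i, 0 ≤ μ i) ∧ (∀ i, IsNNCircuit n (p i)) ∧
    f = ∑ i, C (μ i) * p i

/-- A SONC built from nonnegative circuit polynomials of degree at most `D`. -/
def IsSONCOfDeg (n D : ℕ) (f : MvPolynomial (Fin n) ℝ) : Prop :=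
  ∃ (k : ℕ) (μ : Fin k → ℝ) (p : Fin k → MvPolynomial (Fin n) ℝ),
    (∀ i, 0 ≤ μ i) ∧ (∀ i, IsNNCircuit n (p i) ∧ (p i).totalDegree ≤ D) ∧
    f = ∑ i, C (μ i) * p i

/-- The SONC cone `C_{n,D}`. -/
def InSONCCone (n D : ℕ) (f : MvPolynomial (Fin n) ℝ) : Prop :=
  f.totalDegree ≤ D ∧ IsSONCOfDeg n D f

/-
Let `L_{x,y}` be the linear functional sending a monomial `c X^γ` to `c · max (x^γ, y^γ)`.
If `p ≥ 0` has at most one negative coefficient, at `X^β`, then comparing `p` termwise with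
`L_{x,y} p` at whichever of `x`, `y` realises `max (x^β, y^β)` gives `0 ≤ L_{x,y} p`.
Circuit polynomials have this shape, so `L_{x,y}` is nonnegative on every SONC.
The circuit polynomial `q = (X_i^a - X_j^a)^2` lies in `C_{n,2a}`, but `L_{x,y}(q^2) < 0`
for suitable `x`, `y`, so `q^2` is not a SONC of any degree.
-/

section Pairing

variable {σ : Type*}

theorem prod_pow_add (x : σ → ℝ) (γ δ : σ →₀ ℕ) :
    ((γ + δ).prod fun k e => x k ^ e) =
      (γ.prod fun k e => x k ^ e) * δ.prod fun k e => x k ^ e :=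
  Finsupp.prod_add_index' (fun _ => pow_zero _) fun _ => pow_add _

def maxMonomialPairing (x y : σ → ℝ) : MvPolynomial σ ℝ →ₗ[ℝ] ℝ :=
  (basisMonomials σ ℝ).constr ℝ fun γ =>
    max (γ.prod fun k e => x k ^ e) (γ.prod fun k e => y k ^ e)

theorem maxMonomialPairing_monomial (x y : σ → ℝ) (γ : σ →₀ ℕ) (c : ℝ) :
    maxMonomialPairing x y (monomial γ c) =
      c * max (γ.prod fun k e => x k ^ e) (γ.prod fun k e => y k ^ e) := by
  have hγ : monomial γ c = c • basisMonomials σ ℝ γ := by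
    rw [coe_basisMonomials, smul_monomial, smul_eq_mul, mul_one]
  rw [hγ, map_smul, maxMonomialPairing, Module.Basis.constr_basis, smul_eq_mul]

theorem maxMonomialPairing_comm (x y : σ → ℝ) :
    maxMonomialPairing x y = maxMonomialPairing y x := by
  simp only [maxMonomialPairing, max_comm]

theorem eval_le_maxMonomialPairing_of_coeff_nonneg (x y : σ → ℝ)
    {p : MvPolynomial σ ℝ} {β : σ →₀ ℕ} (hcoeff : ∀ γ ≠ β, 0 ≤ coeff γ p)
    (hle : (β.prod fun k e => y k ^ e) ≤ β.prod fun k e => x k ^ e) :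
    eval x p ≤ maxMonomialPairing x y p := by
  conv_lhs => rw [p.as_sum]
  conv_rhs => rw [p.as_sum]
  simp only [map_sum, eval_monomial, maxMonomialPairing_monomial]
  refine Finset.sum_le_sum fun γ _ => ?_
  obtain rfl | hγ := eq_or_ne γ β
  · rw [max_eq_left hle]
  · exact mul_le_mul_of_nonneg_left (le_max_left _ _) (hcoeff γ hγ)

theorem maxMonomialPairing_nonneg_of_coeff_nonneg (x y : σ → ℝ)
    {p : MvPolynomial σ ℝ} (hx : 0 ≤ eval x p) (hy : 0 ≤ eval y p) {β : σ →₀ ℕ}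
    (hcoeff : ∀ γ ≠ β, 0 ≤ coeff γ p) : 0 ≤ maxMonomialPairing x y p := by
  rcases le_total (β.prod fun k e => y k ^ e) (β.prod fun k e => x k ^ e) with hle | hle
  · exact hx.trans (eval_le_maxMonomialPairing_of_coeff_nonneg x y hcoeff hle)
  · rw [maxMonomialPairing_comm]
    exact hy.trans (eval_le_maxMonomialPairing_of_coeff_nonneg y x hcoeff hle)

end Pairing

theorem IsCircuitPoly.exists_coeff_nonneg_of_ne {n : ℕ} {f : MvPolynomial (Fin n) ℝ}
    (hf : IsCircuitPoly n f) : ∃ β, ∀ γ ≠ β, 0 ≤ coeff γ f := by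
  obtain ⟨r, α, β, cf, c, -, -, hcf, -, -, -, -, -, rfl⟩ := hf
  refine ⟨β, fun γ hγ => ?_⟩
  rw [coeff_add, coeff_monomial, if_neg hγ.symm, add_zero, coeff_sum]
  refine Finset.sum_nonneg fun j _ => ?_
  rw [coeff_monomial]
  split_ifs
  exacts [(hcf j).le, le_rfl]

theorem IsSONCOfDeg.isSONC {n D : ℕ} {f : MvPolynomial (Fin n) ℝ} (hf : IsSONCOfDeg n D f) :
    IsSONC n f := by
  obtain ⟨k, μ, p, hμ, hp, rfl⟩ := hf
  exact ⟨k, μ, p, hμ, fun i => (hp i).1, rfl⟩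

theorem IsSONC.maxMonomialPairing_nonneg {n : ℕ} {f : MvPolynomial (Fin n) ℝ} (hf : IsSONC n f)
    (x y : Fin n → ℝ) : 0 ≤ maxMonomialPairing x y f := by
  obtain ⟨k, μ, p, hμ, hp, rfl⟩ := hf
  rw [map_sum]
  refine Finset.sum_nonneg fun i _ => ?_
  obtain ⟨β, hβ⟩ := (hp i).1.exists_coeff_nonneg_of_ne
  have heval (z : Fin n → ℝ) : 0 ≤ eval z (C (μ i) * p i) := by
    rw [eval_mul, eval_C]
    exact mul_nonneg (hμ i) ((hp i).2 z)
  refine maxMonomialPairing_nonneg_of_coeff_nonneg x y (heval x) (heval y) (β := β)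
    fun γ hγ => ?_
  rw [coeff_C_mul]
  exact mul_nonneg (hμ i) (hβ γ hγ)

theorem IsNNCircuit.inSONCCone {n D : ℕ} {f : MvPolynomial (Fin n) ℝ} (hf : IsNNCircuit n f)
    (hdeg : f.totalDegree ≤ D) : InSONCCone n D f :=
  ⟨hdeg, 1, fun _ => 1, fun _ => f, fun _ => zero_le_one, fun _ => ⟨hf, hdeg⟩, by simp⟩

section CircuitSquare

variable {σ : Type*}

theorem sq_X_pow_sub_X_pow_eq (i j : σ) (a : ℕ) :
    ((X i ^ a - X j ^ a) ^ 2 : MvPolynomial σ ℝ) =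
      monomial (Finsupp.single i (2 * a)) 1 + monomial (Finsupp.single j (2 * a)) 1 +
        monomial (Finsupp.single i a + Finsupp.single j a) (-2) := by
  rw [sub_sq, X_pow_eq_monomial, X_pow_eq_monomial, monomial_pow, monomial_pow, mul_assoc,
    monomial_mul]
  simp only [Finsupp.smul_single, smul_eq_mul, one_pow, mul_one]
  rw [← mul_one (-2 : ℝ), ← C_mul_monomial, map_neg, map_ofNat]
  ring

theorem totalDegree_sq_X_pow_sub_X_pow_le (i j : σ) (a : ℕ) :
    ((X i ^ a - X j ^ a) ^ 2 : MvPolynomial σ ℝ).totalDegree ≤ 2 * a := by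
  refine (totalDegree_pow _ _).trans (Nat.mul_le_mul_left 2 ?_)
  refine (totalDegree_sub _ _).trans (max_le ?_ ?_) <;> exact (totalDegree_X_pow _ _).le

theorem isNNCircuit_sq_X_pow_sub_X_pow {n : ℕ} {i j : Fin n} (hij : i ≠ j) {a : ℕ}
    (ha : 0 < a) :
    IsNNCircuit n ((X i ^ a - X j ^ a) ^ 2) := by
  refine ⟨?_, fun x => by simp only [map_pow, map_sub, eval_X]; positivity⟩
  refine ⟨1, ![Finsupp.single i (2 * a), Finsupp.single j (2 * a)],
    Finsupp.single i a + Finsupp.single j a, fun _ => 1, -2, fun _ => 1 / 2, ?_, fun _ => one_pos,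
    ?_, ?_, fun _ => by norm_num, by norm_num, ?_, ?_⟩
  · exact i.pos
  · have heven (k l : Fin n) : Even (Finsupp.single k (2 * a) l) := by
      rw [Finsupp.single_apply]
      split_ifs <;> simp
    intro k l
    fin_cases k
    exacts [heven i l, heven j l]
  · have hfam :
        (fun k l => ((![Finsupp.single i (2 * a), Finsupp.single j (2 * a)] k l : ℕ) : ℝ)) =
          ![fun l => ((Finsupp.single i (2 * a) l : ℕ) : ℝ),
            fun l => ((Finsupp.single j (2 * a) l : ℕ) : ℝ)] := by
      funext k l
      fin_cases k <;> rfl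
    rw [hfam]
    refine affineIndependent_of_ne ℝ fun h => ?_
    have := congrFun h i
    simp [hij.symm, ha.ne'] at this
  · intro l
    rw [Fin.sum_univ_two]
    simp only [Matrix.cons_val_zero, Matrix.cons_val_one, Finsupp.add_apply, Finsupp.single_apply]
    split_ifs <;> simp_all
  · rw [sq_X_pow_sub_X_pow_eq, Fin.sum_univ_two]
    rfl

theorem exists_maxMonomialPairing_sq_X_pow_sub_X_pow_mul_self_neg {i j : σ} (hij : i ≠ j)
    {a : ℕ} (ha : 0 < a) :
    ∃ x y : σ → ℝ, maxMonomialPairing x y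
      ((X i ^ a - X j ^ a) ^ 2 * (X i ^ a - X j ^ a) ^ 2) < 0 := by
  -- With `v = x i ^ a = y j ^ a = 1 / (x j ^ a) = 1 / (y i ^ a)`, the pairing of
  -- `(X i ^ a - X j ^ a) ^ 4` is `2 v⁴ - 8 v² + 6`, negative for `1 < v² < 3`; take `v = √2`.
  set u : ℝ := √2 ^ (a : ℝ)⁻¹
  have hu : u ^ a = √2 := Real.rpow_inv_natCast_pow (by positivity) ha.ne'
  refine ⟨fun k => if k = i then u else u⁻¹, fun k => if k = i then u⁻¹ else u, ?_⟩
  rw [sq_X_pow_sub_X_pow_eq]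
  simp only [add_mul, mul_add, monomial_mul, map_add, maxMonomialPairing_monomial, prod_pow_add,
    Finsupp.prod_single_index, pow_zero, if_pos, if_neg hij.symm, pow_mul', inv_pow, hu,
    Real.sq_sqrt zero_le_two, mul_inv_cancel₀ (Real.sqrt_ne_zero'.2 two_pos),
    inv_mul_cancel₀ (Real.sqrt_ne_zero'.2 two_pos)]
  norm_num

theorem not_isSONC_sq_X_pow_sub_X_pow_mul_self {n : ℕ} {i j : Fin n} (hij : i ≠ j) {a : ℕ}
    (ha : 0 < a) : ¬ IsSONC n ((X i ^ a - X j ^ a) ^ 2 * (X i ^ a - X j ^ a) ^ 2) := fun hsonc =>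
  let ⟨x, y, hneg⟩ := exists_maxMonomialPairing_sq_X_pow_sub_X_pow_mul_self_neg hij ha
  (hsonc.maxMonomialPairing_nonneg x y).not_gt hneg

end CircuitSquare

/-- For every n ≥ 2 and every even integer d ≥ 2, the SONC cone
`C_{n,d}` is not closed under multiplication: there exist `p₁, p₂ ∈ C_{n,d}`
such that `p₁ * p₂ ∉ C_{n,2d}`. -/
theorem sonc_cone_not_closed_under_multiplication :
    ∀ n : ℕ, 2 ≤ n → ∀ d : ℕ, Even d → 2 ≤ d →
    ∃ p₁ p₂ : MvPolynomial (Fin n) ℝ,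
      InSONCCone n d p₁ ∧ InSONCCone n d p₂ ∧ ¬ InSONCCone n (2 * d) (p₁ * p₂) := by
  rintro n hn d ⟨a, rfl⟩ hd
  have : Nontrivial (Fin n) := Fin.nontrivial_iff_two_le.2 hn
  obtain ⟨i, j, hij⟩ := exists_pair_ne (Fin n)
  have ha : 0 < a := by omega
  have hq : InSONCCone n (a + a) ((X i ^ a - X j ^ a) ^ 2) := by
    rw [← two_mul]
    exact (isNNCircuit_sq_X_pow_sub_X_pow hij ha).inSONCCone
      (totalDegree_sq_X_pow_sub_X_pow_le i j a)
  exact ⟨_, _, hq, hq, fun h => not_isSONC_sq_X_pow_sub_X_pow_mul_self hij ha h.2.isSONC⟩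
end
end

section
/- The polynomial r(x₁,x₂) = ((1 − x₁)(1 − x₂))² is nonnegative on ℝ², and each of the two factors (1 − x₁)² and (1 − x₂)² is a nonnegative circuit polynomial, yet r does not belong to the SONC cone C_{2,4}; that is, r cannot be written as a nonnegative linear combination of nonnegative circuit polynomials of degree at most 4 in two variables. -/
open MvPolynomial Finset
open scoped Classical

noncomputable section

lemma poly_key {r : ℕ} (a : Fin (r + 1) → ℕ) (b : ℕ) (cf : Fin (r + 1) → ℝ) (c : ℝ)
    (hcf : ∀ j, 0 < cf j)
    (h : ∀ t : ℝ, (∑ j, cf j * t ^ a j) + c * t ^ b = 0) :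
    (∀ j, a j = b) ∧ (∑ j, cf j) + c = 0 := by
  set q : Polynomial ℝ :=
    (∑ j, Polynomial.monomial (a j) (cf j)) + Polynomial.monomial b c with hqdef
  have hq : q = 0 := by
    apply Polynomial.funext
    intro t
    simp only [hqdef, Polynomial.eval_add, Polynomial.eval_finset_sum,
      Polynomial.eval_monomial, Polynomial.eval_zero]
    exact h t
  have hcoeff : ∀ e, (∑ j, if a j = e then cf j else 0) + (if b = e then c else 0) = 0 := by
    intro e
    have := congrArg (fun p => Polynomial.coeff p e) hq
    simpa [hqdef, Polynomial.finset_sum_coeff, Polynomial.coeff_monomial] using this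
  have hab : ∀ j, a j = b := by
    intro j0
    by_contra hne
    have h1 := hcoeff (a j0)
    have hb0 : (if b = a j0 then c else 0) = 0 := by
      simp [Ne.symm hne]
    have hpos : 0 < ∑ j, (if a j = a j0 then cf j else 0) := by
      refine Finset.sum_pos' (fun j _ => ?_) ⟨j0, Finset.mem_univ _, by simp [hcf j0]⟩
      split_ifs with h'
      · exact (hcf j).le
      · exact le_refl 0
    rw [hb0, add_zero] at h1
    linarith
  refine ⟨hab, ?_⟩
  have := hcoeff b
  simpa [hab] using this

lemma circuit_vanish (p : MvPolynomial (Fin 2) ℝ)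
    (hp : IsCircuitPoly 2 p)
    (h0 : ∀ t : ℝ, eval ![1, t] p = 0)
    (h1 : ∀ t : ℝ, eval ![t, 1] p = 0) : p = 0 := by
  obtain ⟨r, α, β, cf, c, lam, -, hcf, -, -, -, -, -, hfe⟩ := hp
  have E : ∀ x : Fin 2 → ℝ, eval x p =
      (∑ j, cf j * (x 0 ^ α j 0 * x 1 ^ α j 1)) + c * (x 0 ^ β 0 * x 1 ^ β 1) := by
    intro x
    rw [hfe]
    simp [eval_monomial, Finsupp.prod_pow, Fin.prod_univ_two]
  have key1 := poly_key (fun j => α j 1) (β 1) cf c hcf (fun t => by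
    have := h0 t; rw [E] at this; simpa using this)
  have key0 := poly_key (fun j => α j 0) (β 0) cf c hcf (fun t => by
    have := h1 t; rw [E] at this; simpa using this)
  have hαβ : ∀ j, α j = β := by
    intro j
    ext i
    fin_cases i
    · exact key0.1 j
    · exact key1.1 j
  rw [hfe]
  have hs : (∑ j, monomial (α j) (cf j)) = monomial β (∑ j, cf j) := by
    rw [map_sum]
    exact Finset.sum_congr rfl fun j _ => by rw [hαβ j]
  rw [hs, ← map_add, key1.2, map_zero]

lemma nncircuit_sq (i : Fin 2) : IsNNCircuit 2 ((1 - X i) ^ 2) := by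
  constructor
  · refine ⟨1, ![0, Finsupp.single i 2], Finsupp.single i 1, ![1, 1], -2, ![1/2, 1/2],
      ?_, ?_, ?_, ?_, ?_, ?_, ?_, ?_⟩
    · norm_num
    · intro j; fin_cases j <;> norm_num
    · intro j k; fin_cases j <;> simp [Finsupp.single_apply] <;> split_ifs <;> decide
    · have hfn : (fun (j : Fin 2) (k : Fin 2) => (((![0, Finsupp.single i 2] : Fin 2 → (Fin 2 →₀ ℕ)) j k : ℕ) : ℝ))
        = ![(fun _ => 0 : Fin 2 → ℝ), fun k => ((Finsupp.single i 2 : Fin 2 →₀ ℕ) k : ℝ)] := by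
        funext j k
        fin_cases j <;> simp
      rw [hfn]
      apply affineIndependent_of_ne
      intro h
      have := congrFun h i
      simp [Finsupp.single_apply] at this
    · intro j; fin_cases j <;> norm_num
    · simp [Fin.sum_univ_two]; norm_num
    · intro k
      by_cases h : k = i <;>
        simp [Fin.sum_univ_two, Finsupp.single_apply, h] <;> norm_num
    · rw [Fin.sum_univ_two]
      show (1 - X i) ^ 2 = monomial 0 1 + monomial (Finsupp.single i 2) 1
        + monomial (Finsupp.single i 1) (-2)
      rw [monomial_zero', ← X_pow_eq_monomial, ← C_mul_X_pow_eq_monomial]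
      ring_nf
      simp [map_neg, map_ofNat]
      ring
  · intro x
    simp only [map_pow, map_sub, map_one, eval_X]
    positivity

/-- `r(x₁,x₂) = ((1 − x₁)(1 − x₂))²` is nonnegative on ℝ², each of
`(1 − x₁)²` and `(1 − x₂)²` is a nonnegative circuit polynomial, yet `r ∉ C_{2,4}`. -/
theorem product_of_nonneg_circuits_not_SONC :
    (∀ x : Fin 2 → ℝ,
      0 ≤ eval x (((1 - X 0) * (1 - X 1)) ^ 2 : MvPolynomial (Fin 2) ℝ)) ∧
    IsNNCircuit 2 ((1 - X 0) ^ 2) ∧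
    IsNNCircuit 2 ((1 - X 1) ^ 2) ∧
    ¬ InSONCCone 2 4 (((1 - X 0) * (1 - X 1)) ^ 2) := by
  refine ⟨?_, nncircuit_sq 0, nncircuit_sq 1, ?_⟩
  · intro x
    simp only [map_pow, map_mul, map_sub, map_one, eval_X]
    positivity
  · rintro ⟨-, k, μ, p, hμ, hp, hsum⟩
    have hvan : ∀ x : Fin 2 → ℝ,
        eval x (((1 - X 0) * (1 - X 1)) ^ 2 : MvPolynomial (Fin 2) ℝ) = 0 →
        ∀ i, μ i ≠ 0 → eval x (p i) = 0 := by
      intro x hx i hi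
      have hx' : eval x (∑ i, C (μ i) * p i) = 0 := by rw [← hsum]; exact hx
      rw [map_sum] at hx'
      have h_each : ∀ j ∈ univ, (0 : ℝ) ≤ eval x (C (μ j) * p j) := fun j _ => by
        rw [map_mul, eval_C]
        exact mul_nonneg (hμ j) ((hp j).1.2 _)
      have := (Finset.sum_eq_zero_iff_of_nonneg h_each).mp hx' i (mem_univ i)
      rw [map_mul, eval_C] at this
      rcases mul_eq_zero.mp this with h | h
      · exact absurd h hi
      · exact h
    have hterm : ∀ i, μ i ≠ 0 → p i = 0 := by
      intro i hi
      refine circuit_vanish (p i) (hp i).1.1 (fun t => ?_) (fun t => ?_)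
      · refine hvan ![1, t] ?_ i hi
        simp
      · refine hvan ![t, 1] ?_ i hi
        simp
    have hzero : (((1 - X 0) * (1 - X 1)) ^ 2 : MvPolynomial (Fin 2) ℝ) = 0 := by
      rw [hsum]
      refine Finset.sum_eq_zero fun i _ => ?_
      by_cases h : μ i = 0
      · simp [h]
      · simp [hterm i h]
    have := congrArg (eval (fun _ => 0)) hzero
    simp at this
end
end

section
/- Let f ∈ ℝ[x₁,…,xₙ] be a polynomial of degree at most 2d that vanishes at every point of H. Then there exist polynomials p₁,…,pₙ ∈ ℝ[x₁,…,xₙ], each of degree at most 2d − 2, such that f = Σ_{j=1}^{n} p_j g_j. -/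
/-!
This is Alon's Combinatorial Nullstellensatz on the grid `∏ⱼ {aⱼ, bⱼ}`, whose defining
polynomials are the `gⱼ`. Dividing `f` by the `gⱼ` with respect to a degree-compatible monomial
order leaves a remainder of degree at most one in each variable; it vanishes on the grid, hence is
zero. Degree compatibility gives `deg (gⱼ pⱼ) ≤ deg f ≤ 2d`, and `deg gⱼ = 2` bounds `deg pⱼ`.
-/

open MvPolynomial Finset
open scoped Classical

noncomputable section

/-- The quadratic hypercube constraint `g_j(x) = (x_j − a_j)(x_j − b_j)`. -/
def gpoly {n : ℕ} (a b : Fin n → ℝ) (j : Fin n) : MvPolynomial (Fin n) ℝ :=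
  (X j - C (a j)) * (X j - C (b j))

/-- The Kronecker delta polynomial `δ_v` of a vertex `v` of the hypercube
`∏_j {a_j, b_j}`. -/
def kron {n : ℕ} (a b : Fin n → ℝ) (v : Fin n → ℝ) : MvPolynomial (Fin n) ℝ :=
  ∏ j, if v j = a j then C (1 / (b j - a j)) * (C (b j) - X j)
       else C (1 / (b j - a j)) * (X j - C (a j))

/-- The vertex of the hypercube `∏_j {a_j, b_j}` encoded by `ε : Fin n → Bool`. -/
def vtx {n : ℕ} (a b : Fin n → ℝ) (ε : Fin n → Bool) : Fin n → ℝ :=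
  fun j => if ε j then b j else a j

theorem MvPolynomial.totalDegree_X_sub_C {σ R : Type*} [CommRing R] [Nontrivial R]
    (i : σ) (r : R) : (X i - C r : MvPolynomial σ R).totalDegree = 1 := by
  rw [sub_eq_add_neg, ← C_neg, totalDegree_add_eq_left_of_totalDegree_lt] <;>
    simp [totalDegree_X]

theorem MvPolynomial.totalDegree_le_tsub_of_mul_le {σ R : Type*} [CommRing R] [IsDomain R]
    {p q : MvPolynomial σ R} {D : ℕ} (hp : p ≠ 0) (h : (p * q).totalDegree ≤ D) :
    q.totalDegree ≤ D - p.totalDegree := by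
  rcases eq_or_ne q 0 with rfl | hq
  · simp
  · rw [totalDegree_mul_of_isDomain hp hq] at h
    omega

theorem gpoly_eq_prod {n : ℕ} {a b : Fin n → ℝ} {j : Fin n} (hab : a j ≠ b j) :
    gpoly a b j = ∏ s ∈ {a j, b j}, (X j - C s) := by
  rw [prod_pair hab, gpoly]

theorem totalDegree_gpoly {n : ℕ} (a b : Fin n → ℝ) (j : Fin n) :
    (gpoly a b j).totalDegree = 2 := by
  have hne : ∀ r : ℝ, (X j - C r : MvPolynomial (Fin n) ℝ) ≠ 0 := fun r h => by
    simpa [h] using totalDegree_X_sub_C (R := ℝ) j r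
  rw [gpoly, totalDegree_mul_of_isDomain (hne _) (hne _), totalDegree_X_sub_C,
    totalDegree_X_sub_C]

/-- If `f` has degree at most `2d` and vanishes at every point of
the hypercube `H`, then `f = Σ_j p_j g_j` for some polynomials `p_j` of degree
at most `2d − 2`. -/
theorem vanishing_on_hypercube_ideal_representation
    (n d : ℕ) (a b : Fin n → ℝ) (hab : ∀ j, a j < b j)
    (f : MvPolynomial (Fin n) ℝ) (hdeg : f.totalDegree ≤ 2 * d)
    (hvan : ∀ x : Fin n → ℝ, (∀ j, x j = a j ∨ x j = b j) → eval x f = 0) :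
    ∃ p : Fin n → MvPolynomial (Fin n) ℝ,
      (∀ j, (p j).totalDegree ≤ 2 * d - 2) ∧
      f = ∑ j, p j * gpoly a b j := by
  have hg : ∀ j, gpoly a b j = ∏ s ∈ {a j, b j}, (X j - C s) :=
    fun j => gpoly_eq_prod (hab j).ne
  obtain ⟨p, hpdeg, hf⟩ := combinatorial_nullstellensatz_exists_linearCombination
    (fun j => {a j, b j}) (fun j => insert_nonempty _ _) f
    (fun x hx => hvan x fun j => by simpa using hx j)
  refine ⟨p, fun j => ?_, ?_⟩
  · have hgp : (gpoly a b j * p j).totalDegree ≤ 2 * d := (hg j ▸ hpdeg j).trans hdeg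
    have hg0 : gpoly a b j ≠ 0 := fun h => by simpa [h] using totalDegree_gpoly a b j
    simpa [totalDegree_gpoly] using totalDegree_le_tsub_of_mul_le hg0 hgp
  · rw [hf, Finsupp.linearCombination_apply, Finsupp.sum_fintype _ _ (by simp)]
    simp [hg, smul_eq_mul]
end
end

section
/- A polynomial f ∈ ℝ[x₁,…,xₙ] vanishes at every point of H if and only if f belongs to the ideal ⟨g₁,…,gₙ⟩ generated by g₁,…,gₙ; equivalently, ⟨g₁,…,gₙ⟩ is the vanishing ideal of H (in particular, ⟨g₁,…,gₙ⟩ is a radical ideal). -/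
open MvPolynomial Finset
open scoped Classical

noncomputable section

/-- The Lagrange factor of coordinate `j` for the vertex encoded by `ε`. -/
def lfac {n : ℕ} (a b : Fin n → ℝ) (ε : Fin n → Bool) (j : Fin n) :
    MvPolynomial (Fin n) ℝ :=
  if ε j then C (1 / (b j - a j)) * (X j - C (a j))
  else C (1 / (b j - a j)) * (C (b j) - X j)

lemma sum_prod_lfac {n : ℕ} (a b : Fin n → ℝ) (hab : ∀ j, a j < b j) :
    ∑ ε : Fin n → Bool, ∏ j, lfac a b ε j = 1 := by
  have h := (Finset.prod_univ_sum (t := fun _ : Fin n => (Finset.univ : Finset Bool))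
    (f := fun j t => if t then C (1 / (b j - a j)) * (X j - C (a j))
      else C (1 / (b j - a j)) * (C (b j) - X j))).symm
  rw [Fintype.piFinset_univ] at h
  have h2 : ∑ ε : Fin n → Bool, ∏ j, lfac a b ε j
      = ∏ j, ∑ t : Bool, (if t then C (1 / (b j - a j)) * (X j - C (a j))
          else C (1 / (b j - a j)) * (C (b j) - X j)) := h
  rw [h2]
  apply Finset.prod_eq_one
  intro j _
  have hd : b j - a j ≠ 0 := sub_ne_zero.2 (hab j).ne'
  rw [Fintype.sum_bool]
  simp only [Bool.false_eq_true, if_true, if_false, ← mul_add]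
  have h3 : (X j - C (a j)) + (C (b j) - X j) = (C (b j - a j) : MvPolynomial (Fin n) ℝ) := by
    rw [map_sub]; ring
  rw [h3, ← map_mul, one_div, inv_mul_cancel₀ hd, map_one]

lemma lfac_mul_mem {n : ℕ} (a b : Fin n → ℝ) (ε : Fin n → Bool) (i : Fin n) :
    (∏ j, lfac a b ε j) * (X i - C (vtx a b ε i)) ∈
      Ideal.span (Set.range (gpoly a b)) := by
  have hg : gpoly a b i ∈ Ideal.span (Set.range (gpoly a b)) :=
    Ideal.subset_span ⟨i, rfl⟩
  have h1 : lfac a b ε i * (X i - C (vtx a b ε i)) =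
      C (if ε i then 1/(b i - a i) else -(1/(b i - a i))) * gpoly a b i := by
    unfold lfac vtx gpoly
    by_cases h : ε i <;> simp [h, map_neg] <;> ring
  rw [← Finset.mul_prod_erase _ _ (Finset.mem_univ i)]
  have h2 : (lfac a b ε i * ∏ j ∈ Finset.univ.erase i, lfac a b ε j) *
        (X i - C (vtx a b ε i))
      = (∏ j ∈ Finset.univ.erase i, lfac a b ε j) *
        (lfac a b ε i * (X i - C (vtx a b ε i))) := by ring
  rw [h2, h1]
  exact Ideal.mul_mem_left _ _ (Ideal.mul_mem_left _ _ hg)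

lemma interp_sub_mem {n : ℕ} (a b : Fin n → ℝ) (hab : ∀ j, a j < b j)
    (f : MvPolynomial (Fin n) ℝ) :
    f - ∑ ε : Fin n → Bool, C (eval (vtx a b ε) f) * ∏ j, lfac a b ε j
      ∈ Ideal.span (Set.range (gpoly a b)) := by
  induction f using MvPolynomial.induction_on with
  | C r =>
      have : ∑ ε : Fin n → Bool, C (eval (vtx a b ε) (C r : MvPolynomial (Fin n) ℝ))
          * ∏ j, lfac a b ε j = C r := by
        simp only [eval_C, ← Finset.mul_sum, sum_prod_lfac a b hab, mul_one]
      rw [this, sub_self]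
      exact Ideal.zero_mem _
  | add p q hp hq =>
      have : ∑ ε : Fin n → Bool, C (eval (vtx a b ε) (p + q)) * ∏ j, lfac a b ε j
          = (∑ ε : Fin n → Bool, C (eval (vtx a b ε) p) * ∏ j, lfac a b ε j)
            + ∑ ε : Fin n → Bool, C (eval (vtx a b ε) q) * ∏ j, lfac a b ε j := by
        simp [map_add, add_mul, Finset.sum_add_distrib]
      rw [this, add_sub_add_comm]
      exact Ideal.add_mem _ hp hq
  | mul_X p i hp =>
      have key : p * X i - ∑ ε : Fin n → Bool,
            C (eval (vtx a b ε) (p * X i)) * ∏ j, lfac a b ε j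
          = (p - ∑ ε : Fin n → Bool, C (eval (vtx a b ε) p) * ∏ j, lfac a b ε j) * X i
            + ∑ ε : Fin n → Bool, C (eval (vtx a b ε) p) *
                ((∏ j, lfac a b ε j) * (X i - C (vtx a b ε i))) := by
        have h1 : ∀ ε : Fin n → Bool,
            C (eval (vtx a b ε) p) * ((∏ j, lfac a b ε j) * (X i - C (vtx a b ε i)))
            = C (eval (vtx a b ε) p) * (∏ j, lfac a b ε j) * X i
              - C (eval (vtx a b ε) (p * X i)) * ∏ j, lfac a b ε j := by
          intro ε
          simp only [eval_mul, eval_X, map_mul]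
          ring
        rw [Finset.sum_congr rfl fun ε _ => h1 ε, Finset.sum_sub_distrib,
          ← Finset.sum_mul, sub_mul]
        ring
      rw [key]
      refine Ideal.add_mem _ (Ideal.mul_mem_right _ _ hp) (Ideal.sum_mem _ fun ε _ => ?_)
      exact Ideal.mul_mem_left _ _ (lfac_mul_mem a b ε i)

/-- The vanishing ideal of the hypercube, as an `Ideal`. -/
def vanIdeal {n : ℕ} (a b : Fin n → ℝ) : Ideal (MvPolynomial (Fin n) ℝ) where
  carrier := {f | ∀ x : Fin n → ℝ, (∀ j, x j = a j ∨ x j = b j) → eval x f = 0}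
  add_mem' := fun hp hq x hx => by simp [map_add, hp x hx, hq x hx]
  zero_mem' := fun x hx => by simp
  smul_mem' := fun c f hf x hx => by simp [smul_eq_mul, hf x hx]

lemma span_le_van {n : ℕ} (a b : Fin n → ℝ) :
    Ideal.span (Set.range (gpoly a b)) ≤ vanIdeal a b := by
  rw [Ideal.span_le]
  rintro _ ⟨j, rfl⟩ x hx
  have : eval x (gpoly a b j) = (x j - a j) * (x j - b j) := by
    simp [gpoly]
  rw [this]
  rcases hx j with h | h <;> simp [h]

/-- A polynomial vanishes at every point of the hypercube `H` iff
it belongs to the ideal `⟨g₁,…,gₙ⟩`; in particular `⟨g₁,…,gₙ⟩` is a radical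
ideal (it equals its own radical, being the vanishing ideal of `H`). -/
theorem hypercube_vanishing_ideal
    (n : ℕ) (a b : Fin n → ℝ) (hab : ∀ j, a j < b j) :
    (∀ f : MvPolynomial (Fin n) ℝ,
      (∀ x : Fin n → ℝ, (∀ j, x j = a j ∨ x j = b j) → eval x f = 0) ↔
        f ∈ Ideal.span (Set.range (gpoly a b))) ∧
    (Ideal.span (Set.range (gpoly a b))).radical = Ideal.span (Set.range (gpoly a b)) := by
  have main : ∀ f : MvPolynomial (Fin n) ℝ,
      (∀ x : Fin n → ℝ, (∀ j, x j = a j ∨ x j = b j) → eval x f = 0) ↔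
        f ∈ Ideal.span (Set.range (gpoly a b)) := by
    intro f
    constructor
    · intro hf
      have hz : ∑ ε : Fin n → Bool, C (eval (vtx a b ε) f) * ∏ j, lfac a b ε j = 0 := by
        apply Finset.sum_eq_zero
        intro ε _
        have : eval (vtx a b ε) f = 0 := by
          apply hf
          intro j
          by_cases h : ε j <;> simp [vtx, h]
        simp [this]
      have := interp_sub_mem a b hab f
      rwa [hz, sub_zero] at this
    · intro hf x hx
      exact span_le_van a b hf x hx
  refine ⟨main, le_antisymm ?_ Ideal.le_radical⟩
  intro f hf
  obtain ⟨m, hm⟩ := hf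
  rcases Nat.eq_zero_or_pos m with rfl | hmpos
  · simp only [pow_zero] at hm
    have htop : Ideal.span (Set.range (gpoly a b)) = ⊤ := (Ideal.eq_top_iff_one _).2 hm
    rw [htop]
    trivial
  · apply (main f).mp
    intro x hx
    have h0 := (main (f ^ m)).mpr hm x hx
    rw [map_pow] at h0
    exact pow_eq_zero_iff hmpos.ne' |>.mp h0
end
end

section
/- Let d ∈ ℕ and let f ∈ ℝ[x₁,…,xₙ] be a polynomial of degree at most 2d + 2 that vanishes at every point of H. Then there exist SONCs s₁,…,s_{2n} of degree at most 2d such that f = Σ_{j=1}^{n} s_j g_j + Σ_{j=1}^{n} s_{n+j}(−g_j). -/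
open MvPolynomial Finset
open scoped Classical

noncomputable section

def degw {n : ℕ} (m : Fin n →₀ ℕ) : ℕ := m.sum fun _ e => e

lemma degw_add {n : ℕ} (u v : Fin n →₀ ℕ) : degw (u + v) = degw u + degw v := by
  rw [degw, degw, degw, Finsupp.sum_add_index'] <;> simp

lemma degw_single {n : ℕ} (j : Fin n) (k : ℕ) : degw (Finsupp.single j k) = k := by
  rw [degw]; simp

lemma degw_totalDegree {n : ℕ} (m : Fin n →₀ ℕ) :
    (monomial m (1:ℝ)).totalDegree = degw m := totalDegree_monomial m one_ne_zero

lemma le_degw {n : ℕ} (m : Fin n →₀ ℕ) (i : Fin n) : m i ≤ degw m := by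
  rw [degw, Finsupp.sum]
  by_cases h : i ∈ m.support
  · exact Finset.single_le_sum (fun _ _ => Nat.zero_le _) h
  · simp [Finsupp.notMem_support_iff.1 h]

lemma gpoly_eq {n : ℕ} (a b : Fin n → ℝ) (j : Fin n) :
    (X j : MvPolynomial (Fin n) ℝ)^2 =
      gpoly a b j + C (a j + b j) * X j - C (a j * b j) := by
  unfold gpoly
  rw [map_add, map_mul]
  ring

lemma totalDegree_C_mul {n : ℕ} (c : ℝ) (p : MvPolynomial (Fin n) ℝ) :
    (C c * p).totalDegree ≤ p.totalDegree := by
  simpa using (totalDegree_mul (C c) p).trans (by simp [totalDegree_C])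

lemma support_C_mul {n : ℕ} (c : ℝ) (p : MvPolynomial (Fin n) ℝ) :
    (C c * p).support ⊆ p.support := by
  intro m hm
  simp only [mem_support_iff, coeff_C_mul] at hm ⊢
  exact fun h => hm (by rw [h, mul_zero])

lemma monomial_div {n : ℕ} (a b : Fin n → ℝ) :
    ∀ N (m : Fin n →₀ ℕ), degw m ≤ N →
    ∃ (q : Fin n → MvPolynomial (Fin n) ℝ) (r : MvPolynomial (Fin n) ℝ),
      (∀ i, (q i).totalDegree + 2 ≤ max (degw m) 2) ∧
      (∀ m' ∈ r.support, ∀ i, m' i ≤ 1) ∧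
      monomial m (1:ℝ) = (∑ i, q i * gpoly a b i) + r := by
  intro N
  induction N with
  | zero =>
    intro m hm
    refine ⟨fun _ => 0, monomial m 1, by simp, ?_, by simp⟩
    intro m' hm' i
    have h := Finset.mem_singleton.1 (MvPolynomial.support_monomial_subset hm')
    have := le_degw m i
    rw [h]
    omega
  | succ N ih =>
    intro m hm
    by_cases hml : ∀ i, m i ≤ 1
    · refine ⟨fun _ => 0, monomial m 1, by simp, ?_, by simp⟩
      intro m' hm' i
      have h := Finset.mem_singleton.1 (MvPolynomial.support_monomial_subset hm')
      rw [h]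
      exact hml i
    · push_neg at hml
      obtain ⟨j, hj⟩ := hml
      set m' : Fin n →₀ ℕ := m - Finsupp.single j 2 with hm'def
      have hsplit : m = m' + Finsupp.single j 2 := by
        ext i
        by_cases h : i = j
        · subst h
          simp only [Finsupp.add_apply, hm'def, Finsupp.coe_tsub, Pi.sub_apply,
            Finsupp.single_eq_same]
          omega
        · simp [hm'def, Finsupp.single_apply, Ne.symm h]
      have hD : degw m = degw m' + 2 := by
        conv_lhs => rw [hsplit]
        rw [degw_add, degw_single]
      have hD2 : 2 ≤ degw m := by omega
      set m₁ : Fin n →₀ ℕ := m' + Finsupp.single j 1 with hm₁def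
      have hdm₁ : degw m₁ = degw m - 1 := by
        rw [hm₁def, degw_add, degw_single]; omega
      have hdm' : degw m' = degw m - 2 := by omega
      obtain ⟨q₁, r₁, hq₁, hr₁, he₁⟩ := ih m₁ (by omega)
      obtain ⟨q₂, r₂, hq₂, hr₂, he₂⟩ := ih m' (by omega)
      refine ⟨fun i => (if i = j then monomial m' 1 else 0)
          + C (a j + b j) * q₁ i - C (a j * b j) * q₂ i,
        C (a j + b j) * r₁ - C (a j * b j) * r₂, ?_, ?_, ?_⟩
      · intro i
        beta_reduce
        have h1 : ((if i = j then monomial m' (1:ℝ) else 0)).totalDegree ≤ degw m - 2 := by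
          split
          · rw [degw_totalDegree]; omega
          · simp
        have h2 : (C (a j + b j) * q₁ i).totalDegree ≤ degw m - 2 := by
          have ha := totalDegree_C_mul (a j + b j) (q₁ i)
          have hb := hq₁ i
          omega
        have h3 : (C (a j * b j) * q₂ i).totalDegree ≤ degw m - 2 := by
          have ha := totalDegree_C_mul (a j * b j) (q₂ i)
          have hb := hq₂ i
          omega
        have h4 := totalDegree_sub ((if i = j then monomial m' (1:ℝ) else 0)
          + C (a j + b j) * q₁ i) (C (a j * b j) * q₂ i)
        have h5 := totalDegree_add (if i = j then monomial m' (1:ℝ) else 0)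
          (C (a j + b j) * q₁ i)
        omega
      · intro mm hmm i
        have hsub : (C (a j + b j) * r₁ - C (a j * b j) * r₂).support ⊆
            r₁.support ∪ r₂.support := by
          intro x hx
          simp only [mem_support_iff, coeff_sub, coeff_C_mul] at hx
          simp only [Finset.mem_union, mem_support_iff]
          by_contra hcon
          push_neg at hcon
          rw [hcon.1, hcon.2] at hx
          simp at hx
        rcases Finset.mem_union.1 (hsub hmm) with h | h
        · exact hr₁ mm h i
        · exact hr₂ mm h i
      · have hmono : monomial m (1:ℝ) = monomial m' 1 * (X j)^2 := by
          rw [X_pow_eq_monomial, monomial_mul, one_mul, ← hsplit]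
        have hm₁mono : monomial m₁ (1:ℝ) = monomial m' 1 * X j := by
          rw [X, monomial_mul, one_mul, hm₁def]
        have hkey : monomial m (1:ℝ) = monomial m' 1 * gpoly a b j
            + C (a j + b j) * monomial m₁ 1 - C (a j * b j) * monomial m' 1 := by
          rw [hmono, hm₁mono, gpoly_eq a b j]; ring
        have hsum : ∑ i, ((if i = j then monomial m' (1:ℝ) else 0)
              + C (a j + b j) * q₁ i - C (a j * b j) * q₂ i) * gpoly a b i
            = monomial m' 1 * gpoly a b j + C (a j + b j) * (∑ i, q₁ i * gpoly a b i)
              - C (a j * b j) * (∑ i, q₂ i * gpoly a b i) := by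
          simp only [sub_mul, add_mul, ite_mul, zero_mul, Finset.sum_sub_distrib,
            Finset.sum_add_distrib, Finset.sum_ite_eq', Finset.mem_univ, if_true,
            Finset.mul_sum, mul_assoc]
        rw [hsum, hkey, he₁, he₂]
        ring

lemma poly_div {n : ℕ} (a b : Fin n → ℝ) (f : MvPolynomial (Fin n) ℝ) :
    ∃ (q : Fin n → MvPolynomial (Fin n) ℝ) (r : MvPolynomial (Fin n) ℝ),
      (∀ i, (q i).totalDegree + 2 ≤ max f.totalDegree 2) ∧
      (∀ m' ∈ r.support, ∀ i, m' i ≤ 1) ∧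
      f = (∑ i, q i * gpoly a b i) + r := by
  choose Q R hQ hR hE using fun m : Fin n →₀ ℕ => monomial_div a b (degw m) m le_rfl
  refine ⟨fun i => ∑ m ∈ f.support, C (coeff m f) * Q m i,
    ∑ m ∈ f.support, C (coeff m f) * R m, ?_, ?_, ?_⟩
  · intro i
    beta_reduce
    have hsup := MvPolynomial.totalDegree_finset_sum f.support
      (fun m => C (coeff m f) * Q m i)
    have hb : ∀ m ∈ f.support,
        (C (coeff m f) * Q m i).totalDegree + 2 ≤ max f.totalDegree 2 := by
      intro m hm
      have h1 := totalDegree_C_mul (coeff m f) (Q m i)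
      have h2 := hQ m i
      have h3 : degw m ≤ f.totalDegree := MvPolynomial.le_totalDegree hm
      omega
    have : f.support.sup (fun m => (C (coeff m f) * Q m i).totalDegree)
        ≤ max f.totalDegree 2 - 2 := by
      apply Finset.sup_le
      intro m hm
      have := hb m hm
      omega
    have h4 : 2 ≤ max f.totalDegree 2 := le_max_right _ _
    omega
  · intro mm hmm i
    obtain ⟨m, hm, hmem⟩ := Finset.mem_biUnion.1 (MvPolynomial.support_sum hmm)
    exact hR m mm (support_C_mul _ _ hmem) i
  · conv_lhs => rw [(f.support_sum_monomial_coeff).symm]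
    have : ∀ m ∈ f.support, monomial m (coeff m f)
        = C (coeff m f) * ((∑ i, Q m i * gpoly a b i) + R m) := by
      intro m _
      rw [← hE m, C_mul_monomial, mul_one]
    rw [Finset.sum_congr rfl this]
    simp only [mul_add, Finset.sum_add_distrib, Finset.mul_sum]
    congr 1
    rw [Finset.sum_comm]
    refine Finset.sum_congr rfl fun i _ => ?_
    rw [Finset.sum_mul]
    exact Finset.sum_congr rfl fun m _ => by ring

open scoped Pointwise

lemma multilinear_vanish₀ {n : ℕ} (b : Fin n → ℝ) (hb : ∀ j, b j ≠ 0)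
    (r : MvPolynomial (Fin n) ℝ) (hml : ∀ m ∈ r.support, ∀ i, m i ≤ 1)
    (hv : ∀ x : Fin n → ℝ, (∀ j, x j = 0 ∨ x j = b j) → eval x r = 0) : r = 0 := by
  by_contra hr
  obtain ⟨m₀, hm₀, hmin⟩ := r.support.exists_min_image (fun m => m.support.card)
    (by rwa [Finset.nonempty_iff_ne_empty, Ne, MvPolynomial.support_eq_empty])
  set S := m₀.support with hS
  set x : Fin n → ℝ := fun j => if j ∈ S then b j else 0 with hx
  have hx0 : ∀ j, x j = 0 ∨ x j = b j := by
    intro j; by_cases h : j ∈ S <;> simp [hx, h]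
  have h0 := hv x hx0
  rw [eval_eq] at h0
  have hterm : ∀ m ∈ r.support, m ≠ m₀ →
      coeff m r * ∏ i ∈ m.support, x i ^ m i = 0 := by
    intro m hm hne
    by_cases hsub : m.support ⊆ S
    · exfalso
      have hcard : S.card ≤ m.support.card := hmin m hm
      have hsupeq : m.support = S := Finset.eq_of_subset_of_card_le hsub hcard
      apply hne
      ext i
      by_cases h : i ∈ m.support
      · have h' : i ∈ m₀.support := by rw [← hS, ← hsupeq]; exact h
        have e1 : m i = 1 := le_antisymm (hml m hm i)
          (Nat.one_le_iff_ne_zero.2 (Finsupp.mem_support_iff.1 h))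
        have e2 : m₀ i = 1 := le_antisymm (hml m₀ hm₀ i)
          (Nat.one_le_iff_ne_zero.2 (Finsupp.mem_support_iff.1 h'))
        rw [e1, e2]
      · have h' : i ∉ m₀.support := by rw [← hS, ← hsupeq]; exact h
        rw [Finsupp.notMem_support_iff.1 h, Finsupp.notMem_support_iff.1 h']
    · obtain ⟨i, hi, hiS⟩ := Finset.not_subset.1 hsub
      refine mul_eq_zero_of_right _ (Finset.prod_eq_zero hi ?_)
      have hxi : x i = 0 := by rw [hx]; simp [hiS]
      rw [hxi]
      exact zero_pow (Finsupp.mem_support_iff.1 hi)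
  rw [Finset.sum_eq_single m₀ hterm (fun h => absurd hm₀ h)] at h0
  have hne : ∏ i ∈ m₀.support, x i ^ m₀ i ≠ 0 := by
    refine Finset.prod_ne_zero_iff.2 fun i hi => ?_
    have hxi : x i = b i := by rw [hx]; simp [hS ▸ hi]
    rw [hxi]
    exact pow_ne_zero _ (hb i)
  exact Finsupp.mem_support_iff.1 hm₀ ((mul_eq_zero.1 h0).resolve_right hne)

lemma eval_aeval' {n : ℕ} (x : Fin n → ℝ) (g : Fin n → MvPolynomial (Fin n) ℝ)
    (p : MvPolynomial (Fin n) ℝ) :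
    eval x (aeval g p) = eval (fun j => eval x (g j)) p := by
  induction p using MvPolynomial.induction_on with
  | C c => simp
  | add p q hp hq => rw [map_add, map_add, hp, hq, map_add]
  | mul_X p i hp => rw [map_mul, aeval_X, map_mul, hp]; simp

lemma support_prod_linear {n : ℕ} (a : Fin n → ℝ) (s : Finset (Fin n)) :
    ∀ m' ∈ (∏ i ∈ s, (X i + C (a i) : MvPolynomial (Fin n) ℝ)).support,
      ∀ i, m' i ≤ (if i ∈ s then 1 else 0) := by
  induction s using Finset.induction_on with
  | empty =>
    intro m' hm' i
    rw [Finset.prod_empty, ← C_1, C_apply] at hm'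
    have h1 : m' = 0 := Finset.mem_singleton.1 (MvPolynomial.support_monomial_subset hm')
    simp [h1]
  | @insert j s hj ih =>
    intro m' hm' i
    rw [Finset.prod_insert hj] at hm'
    have hsub := support_mul (X j + C (a j)) (∏ i ∈ s, (X i + C (a i) : MvPolynomial (Fin n) ℝ))
    obtain ⟨u, hu, v, hv, huv⟩ := Finset.mem_add.1 (hsub hm')
    have hXsupp : (X j + C (a j) : MvPolynomial (Fin n) ℝ).support ⊆
        {Finsupp.single j 1, 0} := by
      refine (MvPolynomial.support_add).trans ?_
      rw [MvPolynomial.support_X]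
      intro z hz
      rcases Finset.mem_union.1 hz with h | h
      · exact Finset.mem_insert.2 (Or.inl (Finset.mem_singleton.1 h))
      · rw [C_apply] at h
        exact Finset.mem_insert.2 (Or.inr (MvPolynomial.support_monomial_subset h))
    have hu' : u i ≤ (if i = j then 1 else 0) := by
      rcases Finset.mem_insert.1 (hXsupp hu) with h | h
      · subst h; rw [Finsupp.single_apply]; split <;> simp_all
      · rw [Finset.mem_singleton.1 h]; simp
    have hv' : v i ≤ (if i ∈ s then 1 else 0) := ih v hv i
    have : m' i = u i + v i := by rw [← huv]; rfl
    rw [this]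
    by_cases h1 : i = j
    · subst h1
      rw [if_pos rfl] at hu'
      simp only [Finset.mem_insert, true_or, if_true]
      have h2 : (if i ∈ s then 1 else 0 : ℕ) = 0 := by simp [hj]
      omega
    · rw [if_neg h1] at hu'
      simp only [Finset.mem_insert, h1, false_or]
      omega

lemma multilinear_vanish {n : ℕ} (a b : Fin n → ℝ) (hab : ∀ j, a j < b j)
    (r : MvPolynomial (Fin n) ℝ) (hml : ∀ m ∈ r.support, ∀ i, m i ≤ 1)
    (hv : ∀ x : Fin n → ℝ, (∀ j, x j = a j ∨ x j = b j) → eval x r = 0) : r = 0 := by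
  set φ : MvPolynomial (Fin n) ℝ →ₐ[ℝ] MvPolynomial (Fin n) ℝ :=
    aeval (fun j => X j + C (a j)) with hφ
  set ψ : MvPolynomial (Fin n) ℝ →ₐ[ℝ] MvPolynomial (Fin n) ℝ :=
    aeval (fun j => X j - C (a j)) with hψ
  have hcomp : ψ.comp φ = AlgHom.id ℝ _ := by
    apply MvPolynomial.algHom_ext
    intro i
    simp [hφ, hψ]
  -- multilinearity of φ r
  have hphiml : ∀ m ∈ (φ r).support, ∀ i, m i ≤ 1 := by
    have hrsum : φ r = ∑ m ∈ r.support, φ (monomial m (coeff m r)) := by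
      conv_lhs => rw [(r.support_sum_monomial_coeff).symm]
      exact map_sum φ _ _
    intro m' hm' i
    rw [hrsum] at hm'
    obtain ⟨m, hm, hmem⟩ := Finset.mem_biUnion.1 (MvPolynomial.support_sum hm')
    have hmono : φ (monomial m (coeff m r)) =
        C (coeff m r) * ∏ j ∈ m.support, (X j + C (a j)) := by
      rw [hφ, aeval_monomial, Finsupp.prod]
      congr 1
      refine Finset.prod_congr rfl fun j hj => ?_
      have : m j = 1 := le_antisymm (hml m hm j)
        (Nat.one_le_iff_ne_zero.2 (Finsupp.mem_support_iff.1 hj))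
      rw [this, pow_one]
    rw [hmono] at hmem
    have := support_prod_linear a m.support _ (support_C_mul _ _ hmem) i
    split at this
    · omega
    · omega
  have hphivan : ∀ x : Fin n → ℝ, (∀ j, x j = 0 ∨ x j = b j - a j) → eval x (φ r) = 0 := by
    intro x hx
    rw [hφ, eval_aeval']
    have : ∀ j, (fun j => eval x (X j + C (a j))) j = a j ∨
        (fun j => eval x (X j + C (a j))) j = b j := by
      intro j
      simp only [map_add, eval_X, eval_C]
      rcases hx j with h | h
      · left; rw [h, zero_add]
      · right; rw [h]; ring
    exact hv _ this
  have hphir : φ r = 0 := multilinear_vanish₀ (fun j => b j - a j)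
    (fun j => sub_ne_zero.2 (hab j).ne') (φ r) hphiml hphivan
  have : r = ψ (φ r) := by
    rw [← AlgHom.comp_apply, hcomp]; rfl
  rw [this, hphir, map_zero]

lemma sonc_zero (n D : ℕ) : IsSONCOfDeg n D 0 := by
  refine ⟨0, ![], ![], ?_, ?_, by simp⟩ <;> exact fun i => i.elim0

lemma sonc_add {n D : ℕ} {f g : MvPolynomial (Fin n) ℝ}
    (hf : IsSONCOfDeg n D f) (hg : IsSONCOfDeg n D g) : IsSONCOfDeg n D (f + g) := by
  obtain ⟨k, μ, p, hμ, hp, rfl⟩ := hf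
  obtain ⟨k', μ', p', hμ', hp', rfl⟩ := hg
  refine ⟨k + k', Fin.append μ μ', Fin.append p p', ?_, ?_, ?_⟩
  · intro i
    induction i using Fin.addCases with
    | left i => simpa using hμ i
    | right i => simpa using hμ' i
  · intro i
    induction i using Fin.addCases with
    | left i => simpa using hp i
    | right i => simpa using hp' i
  · rw [Fin.sum_univ_add]
    simp

lemma sonc_smul {n D : ℕ} {f : MvPolynomial (Fin n) ℝ} {c : ℝ} (hc : 0 ≤ c)
    (hf : IsSONCOfDeg n D f) : IsSONCOfDeg n D (C c * f) := by
  obtain ⟨k, μ, p, hμ, hp, rfl⟩ := hf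
  refine ⟨k, fun i => c * μ i, p, fun i => mul_nonneg hc (hμ i), hp, ?_⟩
  rw [Finset.mul_sum]
  exact Finset.sum_congr rfl fun i _ => by rw [map_mul, mul_assoc]

lemma nncircuit_sonc {n D : ℕ} {p : MvPolynomial (Fin n) ℝ}
    (hp : IsNNCircuit n p) (hd : p.totalDegree ≤ D) : IsSONCOfDeg n D p := by
  refine ⟨1, fun _ => 1, fun _ => p, fun _ => zero_le_one, fun _ => ⟨hp, hd⟩, by simp⟩

/-- An even monomial is a nonnegative circuit polynomial. -/
lemma even_monomial_nncircuit {n : ℕ} (β : Fin n →₀ ℕ) (hβ : ∀ i, Even (β i)) :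
    IsNNCircuit n (monomial β (1:ℝ)) := by
  constructor
  · haveI : Subsingleton (Fin (0+1)) := by
      constructor; intro a b; fin_cases a <;> fin_cases b <;> rfl
    refine ⟨0, fun _ => β, β, fun _ => 1, 0, fun _ => 1, Nat.zero_le n,
      fun _ => one_pos, fun _ => hβ, affineIndependent_of_subsingleton ℝ _,
      fun _ => one_pos, by simp, by simp, by simp⟩
  · intro x
    rw [eval_monomial]
    rw [one_mul, Finsupp.prod]
    exact Finset.prod_nonneg fun i _ => (hβ i).pow_nonneg _

/-- The binomial square `x^{2u} - 2 x^{u+w} + x^{2w}` is a nonnegative circuit. -/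
lemma binom_square_nncircuit {n : ℕ} (hn : 1 ≤ n) (u w : Fin n →₀ ℕ) (huw : u ≠ w) :
    IsNNCircuit n (monomial (2 • u) (1:ℝ) + monomial (2 • w) 1 + monomial (u + w) (-2)) := by
  have hA : monomial (2 • u) (1:ℝ) = monomial u 1 * monomial u 1 := by
    rw [monomial_mul, one_mul, two_smul]
  have hB : monomial (2 • w) (1:ℝ) = monomial w 1 * monomial w 1 := by
    rw [monomial_mul, one_mul, two_smul]
  have hC : monomial (u + w) (-2:ℝ) = C (-2) * (monomial u 1 * monomial w 1) := by
    rw [monomial_mul, one_mul, C_mul_monomial]; norm_num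
  have hC2 : (C (-2:ℝ) : MvPolynomial (Fin n) ℝ) = -2 := by
    rw [map_neg, map_ofNat]
  have hsq : monomial (2 • u) (1:ℝ) + monomial (2 • w) 1 + monomial (u + w) (-2)
      = (monomial u 1 - monomial w 1)^2 := by
    rw [hA, hB, hC, hC2]; ring
  constructor
  · refine ⟨1, ![2 • u, 2 • w], u + w, ![1, 1], -2, ![1/2, 1/2], hn,
      ?_, ?_, ?_, ?_, ?_, ?_, ?_⟩
    · intro j; fin_cases j <;> norm_num
    · intro j i; fin_cases j <;> simp only [Matrix.cons_val_zero, Matrix.cons_val_one,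
        Matrix.head_cons, Finsupp.smul_apply, smul_eq_mul] <;> exact even_two_mul _
    · have : (fun (j : Fin (1+1)) (i : Fin n) => ((((![2 • u, 2 • w]) j) i : ℕ) : ℝ))
          = ![(fun i => ((2 * u i : ℕ) : ℝ)), (fun i => ((2 * w i : ℕ) : ℝ))] := by
        funext j i; fin_cases j <;> simp [Finsupp.smul_apply]
      rw [this]
      apply affineIndependent_of_ne
      intro hcon
      apply huw
      ext i
      have := congrFun hcon i
      exact_mod_cast mul_left_cancel₀ (two_ne_zero) (by exact_mod_cast this)
    · intro j; fin_cases j <;> norm_num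
    · simp [Fin.sum_univ_two]; norm_num
    · intro i
      simp only [Fin.sum_univ_succ, Fin.sum_univ_zero, Matrix.cons_val_zero, Matrix.cons_val_one,
        Matrix.cons_val_succ, Matrix.head_cons, Finsupp.add_apply, Finsupp.smul_apply, smul_eq_mul]
      push_cast; ring
    · simp [Fin.sum_univ_two]
  · intro x
    rw [hsq, map_pow]
    positivity

def IsDiffSONC (n D : ℕ) (f : MvPolynomial (Fin n) ℝ) : Prop :=
  ∃ s s', IsSONCOfDeg n D s ∧ IsSONCOfDeg n D s' ∧ f = s - s'

lemma diff_zero (n D : ℕ) : IsDiffSONC n D 0 :=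
  ⟨0, 0, sonc_zero n D, sonc_zero n D, by simp⟩

lemma diff_add {n D : ℕ} {f g : MvPolynomial (Fin n) ℝ}
    (hf : IsDiffSONC n D f) (hg : IsDiffSONC n D g) : IsDiffSONC n D (f + g) := by
  obtain ⟨s, s', hs, hs', rfl⟩ := hf
  obtain ⟨t, t', ht, ht', rfl⟩ := hg
  exact ⟨s + t, s' + t', sonc_add hs ht, sonc_add hs' ht', by ring⟩

lemma diff_smul {n D : ℕ} {f : MvPolynomial (Fin n) ℝ} (c : ℝ)
    (hf : IsDiffSONC n D f) : IsDiffSONC n D (C c * f) := by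
  obtain ⟨s, s', hs, hs', rfl⟩ := hf
  rcases le_or_gt 0 c with hc | hc
  · exact ⟨C c * s, C c * s', sonc_smul hc hs, sonc_smul hc hs', by ring⟩
  · refine ⟨C (-c) * s', C (-c) * s, sonc_smul (by linarith) hs',
      sonc_smul (by linarith) hs, ?_⟩
    rw [map_neg]
    ring

lemma diff_sum {n D : ℕ} {ι : Type*} (A : Finset ι) (F : ι → MvPolynomial (Fin n) ℝ)
    (h : ∀ i ∈ A, IsDiffSONC n D (F i)) : IsDiffSONC n D (∑ i ∈ A, F i) := by
  induction A using Finset.cons_induction with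
  | empty => simpa using diff_zero n D
  | cons i A hi ih =>
    rw [Finset.sum_cons]
    exact diff_add (h i (Finset.mem_cons_self i A))
      (ih fun j hj => h j (Finset.mem_cons.2 (Or.inr hj)))

lemma exists_le_degw {n : ℕ} (β : Fin n →₀ ℕ) :
    ∀ t, t ≤ degw β → ∃ u : Fin n →₀ ℕ, (∀ i, u i ≤ β i) ∧ degw u = t := by
  intro t
  induction t with
  | zero => intro _; exact ⟨0, by simp, by simp [degw]⟩
  | succ t ih =>
    intro ht
    obtain ⟨u, hu, hdu⟩ := ih (by omega)
    have hne : ∃ i, u i < β i := by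
      by_contra hcon
      push_neg at hcon
      have : β = u := by ext i; exact le_antisymm (hcon i) (hu i)
      rw [this] at ht
      omega
    obtain ⟨i, hi⟩ := hne
    refine ⟨u + Finsupp.single i 1, ?_, ?_⟩
    · intro j
      by_cases h : j = i
      · subst h; simp only [Finsupp.add_apply, Finsupp.single_eq_same]; omega
      · simp [Finsupp.single_apply, Ne.symm h, hu j]
    · rw [degw_add, degw_single, hdu]

lemma degw_two_smul {n : ℕ} (u : Fin n →₀ ℕ) : degw (2 • u) = 2 * degw u := by
  rw [two_smul, degw_add]; ring

/-- Any monomial of weighted degree at most `2d` is a difference of SONCs of degree `2d`. -/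
lemma monomial_diff {n d : ℕ} (β : Fin n →₀ ℕ) (c : ℝ) (hβ : degw β ≤ 2 * d) :
    IsDiffSONC n (2 * d) (monomial β c) := by
  have hmono : monomial β c = C c * monomial β 1 := by rw [C_mul_monomial, mul_one]
  rw [hmono]
  apply diff_smul
  by_cases hev : ∀ i, Even (β i)
  · refine ⟨monomial β 1, 0, nncircuit_sonc (even_monomial_nncircuit β hev) ?_,
      sonc_zero _ _, by simp⟩
    rw [degw_totalDegree]; exact hβ
  · push_neg at hev
    obtain ⟨i₀, hi₀⟩ := hev
    have hn : 1 ≤ n := i₀.pos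
    obtain ⟨u, hu, hdu⟩ := exists_le_degw β ((degw β + 1) / 2) (by omega)
    set w : Fin n →₀ ℕ := β - u with hw
    have hsplit : β = u + w := by
      ext j
      simp only [Finsupp.add_apply, hw, Finsupp.coe_tsub, Pi.sub_apply]
      have := hu j
      omega
    have hdw : degw w = degw β - (degw β + 1) / 2 := by
      have := degw_add u w
      rw [← hsplit] at this
      omega
    have huw : u ≠ w := by
      intro hcon
      apply hi₀
      have : β i₀ = 2 * u i₀ := by rw [hsplit, ← hcon]; simp [Finsupp.add_apply]; ring
      exact ⟨u i₀, by omega⟩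
    have hdu2 : degw u ≤ d := by omega
    have hdw2 : degw w ≤ d := by omega
    -- P and Q
    set P : MvPolynomial (Fin n) ℝ := monomial (2 • u) 1 + monomial (2 • w) 1 with hP
    set Q : MvPolynomial (Fin n) ℝ := P + monomial (u + w) (-2) with hQ
    have hPs : IsSONCOfDeg n (2 * d) (C (1/2) * P) := by
      apply sonc_smul (by norm_num)
      apply sonc_add
      · refine nncircuit_sonc (even_monomial_nncircuit _ fun i => ?_) ?_
        · rw [two_smul]; exact ⟨u i, by simp [Finsupp.add_apply]⟩
        · rw [degw_totalDegree, degw_two_smul]; omega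
      · refine nncircuit_sonc (even_monomial_nncircuit _ fun i => ?_) ?_
        · rw [two_smul]; exact ⟨w i, by simp [Finsupp.add_apply]⟩
        · rw [degw_totalDegree, degw_two_smul]; omega
    have hQs : IsSONCOfDeg n (2 * d) (C (1/2) * Q) := by
      apply sonc_smul (by norm_num)
      refine nncircuit_sonc (binom_square_nncircuit hn u w huw) ?_
      rw [hQ, hP]
      have h1 := totalDegree_add (monomial (2 • u) (1:ℝ) + monomial (2 • w) 1)
        (monomial (u + w) (-2:ℝ))
      have h2 := totalDegree_add (monomial (2 • u) (1:ℝ)) (monomial (2 • w) (1:ℝ))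
      have e1 : (monomial (2 • u) (1:ℝ)).totalDegree = 2 * degw u := by
        rw [degw_totalDegree, degw_two_smul]
      have e2 : (monomial (2 • w) (1:ℝ)).totalDegree = 2 * degw w := by
        rw [degw_totalDegree, degw_two_smul]
      have e3 : (monomial (u + w) (-2:ℝ)).totalDegree ≤ 2 * d := by
        have := totalDegree_monomial_le (u + w) (-2:ℝ)
        have h4 : degw (u + w) ≤ 2 * d := by rw [degw_add]; omega
        calc (monomial (u + w) (-2:ℝ)).totalDegree ≤ degw (u + w) := this
          _ ≤ 2 * d := h4
      omega
    refine ⟨C (1/2) * P, C (1/2) * Q, hPs, hQs, ?_⟩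
    rw [hQ]
    have : monomial (u + w) (-2:ℝ) = C (-2) * monomial (u+w) 1 := by
      rw [C_mul_monomial]; norm_num
    have h2 : C ((1:ℝ)/2) * P - C (1/2) * (P + C (-2) * monomial β 1)
        = - (C ((1:ℝ)/2) * C (-2)) * monomial β 1 := by ring
    have h3 : (C (-1:ℝ) : MvPolynomial (Fin n) ℝ) = -1 := by
      rw [show (-1:ℝ) = -(1:ℝ) by norm_num, map_neg, C_1]
    rw [this, ← hsplit, h2, ← C_mul, show ((1:ℝ)/2 * -2) = -1 by norm_num, h3]
    ring

lemma poly_diff {n d : ℕ} (f : MvPolynomial (Fin n) ℝ) (hdeg : f.totalDegree ≤ 2 * d) :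
    IsDiffSONC n (2 * d) f := by
  conv => rw [(f.support_sum_monomial_coeff).symm]
  refine diff_sum f.support _ fun m hm => ?_
  exact monomial_diff m (coeff m f) ((MvPolynomial.le_totalDegree hm).trans hdeg)

/-- If `f` has degree at most `2d + 2` and vanishes at every point
of the hypercube `H`, then there are SONCs `s₁,…,s_{2n}` of degree at most `2d`
with `f = Σ_j s_j g_j + Σ_j s_{n+j}(−g_j)`. -/
theorem vanishing_on_hypercube_SONC_representation
    (n d : ℕ) (a b : Fin n → ℝ) (hab : ∀ j, a j < b j)
    (f : MvPolynomial (Fin n) ℝ) (hdeg : f.totalDegree ≤ 2 * d + 2)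
    (hvan : ∀ x : Fin n → ℝ, (∀ j, x j = a j ∨ x j = b j) → eval x f = 0) :
    ∃ s s' : Fin n → MvPolynomial (Fin n) ℝ,
      (∀ j, IsSONCOfDeg n (2 * d) (s j)) ∧
      (∀ j, IsSONCOfDeg n (2 * d) (s' j)) ∧
      f = (∑ j, s j * gpoly a b j) + (∑ j, s' j * (- gpoly a b j)) := by

  obtain ⟨q, r, hq, hr, hE⟩ := poly_div a b f
  -- r vanishes on the hypercube
  have hrv : ∀ x : Fin n → ℝ, (∀ j, x j = a j ∨ x j = b j) → eval x r = 0 := by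
    intro x hx
    have hg : ∀ j, eval x (gpoly a b j) = 0 := by
      intro j
      unfold gpoly
      rw [map_mul, map_sub, map_sub, eval_X, eval_C, eval_C]
      rcases hx j with h | h
      · rw [h]; ring
      · rw [h]; ring
    have := hvan x hx
    rw [hE, map_add, map_sum] at this
    simpa [hg] using this
  have hr0 : r = 0 := multilinear_vanish a b hab r hr hrv
  rw [hr0, add_zero] at hE
  -- decompose each q j
  have hqd : ∀ j, (q j).totalDegree ≤ 2 * d := by
    intro j
    have := hq j
    omega
  choose s s' hs hs' hqe using fun j => poly_diff (q j) (hqd j)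
  refine ⟨s, s', hs, hs', ?_⟩
  rw [hE]
  rw [← Finset.sum_add_distrib]
  refine Finset.sum_congr rfl fun j _ => ?_
  rw [hqe j]
  ring
end
end

section
/- Suppose f ∈ ℝ[x₁,…,xₙ] admits a degree d SONC certificate over H_P: f = Σ_{j=1}^{N} s_j H_j where each s_j is a SONC, each H_j is a finite product of polynomials from the family G = {g₁,…,gₙ, −g₁,…,−gₙ} ∪ {x_j − a_j, b_j − x_j : j ∈ [n]} ∪ P (with |P| = m), and deg(s_j H_j) ≤ d for every j. Then f admits a degree d SONC certificate of the same form in which the total number of nonnegative circuit polynomials appearing across all the SONCs is at most C(4n + m + d, d)·(C(n + d, d) + 1), where C(·,·) denotes the binomial coefficient. -/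
/-! Expanding every SONC writes `f` as a nonnegative combination of products `q * H` of a
nonnegative circuit polynomial `q` and a product `H` of generators. Each product with a positive
weight `μ` still has degree at most `d`: `q ≤ s / μ` pointwise for the SONC `s` it comes from, and a
nonnegative polynomial bounded above by another one has no larger degree (restrict both to a line
through a point where the top homogeneous component of the smaller one does not vanish, and
compare leading coefficients). Hence `f` lies in the convex cone spanned by these products inside
the polynomials of degree `≤ d`, a space of dimension `C(n + d, d)`, and Carathéodory's theorem
keeps at most `C(n + d, d) + 1` of them, each of which becomes a block of its own. -/

open MvPolynomial Finset
open scoped Classical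

noncomputable section

/-- The family `G = {g₁,…,gₙ, −g₁,…,−gₙ} ∪ {x_j − a_j, b_j − x_j : j} ∪ P` of
polynomials from which the products in a SONC certificate are formed. -/
def certFamily {n : ℕ} (a b : Fin n → ℝ) (P : Finset (MvPolynomial (Fin n) ℝ)) :
    Set (MvPolynomial (Fin n) ℝ) :=
  {q | (∃ j, q = gpoly a b j ∨ q = - gpoly a b j ∨
        q = X j - C (a j) ∨ q = C (b j) - X j) ∨ q ∈ P}

namespace Polynomial

theorem leadingCoeff_nonneg_of_forall_eval_nonneg {p : ℝ[X]} (hp : ∀ x, 0 ≤ p.eval x) :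
    0 ≤ p.leadingCoeff := by
  by_contra! hlc
  rcases lt_or_ge 0 p.degree with hdeg | hdeg
  · obtain ⟨x, hx⟩ := ((p.tendsto_atBot_of_leadingCoeff_nonpos hdeg hlc.le).eventually
      (Filter.eventually_lt_atBot 0)).exists
    exact (hp x).not_gt hx
  · rw [eq_C_of_degree_le_zero hdeg, leadingCoeff_C] at hlc
    exact (hp 0).not_gt (by simpa [coeff_zero_eq_eval_zero] using hlc)

theorem natDegree_le_of_forall_eval_nonneg_of_le {p q : ℝ[X]} (hp : ∀ x, 0 ≤ p.eval x)
    (hpq : ∀ x, p.eval x ≤ q.eval x) : p.natDegree ≤ q.natDegree := by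
  by_contra! hlt
  have hp0 : p ≠ 0 := by rintro rfl; simp at hlt
  have hlc : (q - p).leadingCoeff = -p.leadingCoeff :=
    leadingCoeff_sub_of_degree_lt' (degree_lt_degree hlt)
  have hqp := leadingCoeff_nonneg_of_forall_eval_nonneg (p := q - p)
    fun x => by simpa using hpq x
  have hlcp := leadingCoeff_nonneg_of_forall_eval_nonneg hp
  exact hp0 (leadingCoeff_eq_zero.1 (by linarith))

end Polynomial

namespace MvPolynomial

variable {σ : Type*}

section CommSemiring

variable {R : Type*} [CommSemiring R]

def restrictLine (v : σ → R) : MvPolynomial σ R →ₐ[R] Polynomial R :=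
  aeval fun i => Polynomial.C (v i) * Polynomial.X

theorem restrictLine_monomial (v : σ → R) (α : σ →₀ ℕ) (c : R) :
    restrictLine v (monomial α c) =
      Polynomial.C (eval v (monomial α c)) * Polynomial.X ^ α.degree := by
  simp [restrictLine, aeval_monomial, eval_monomial, mul_pow, Finsupp.prod, Finset.prod_mul_distrib,
    Finset.prod_pow_eq_pow_sum, Finsupp.degree_apply, mul_assoc]

theorem coeff_restrictLine (v : σ → R) (p : MvPolynomial σ R) (k : ℕ) :
    (restrictLine v p).coeff k = eval v (homogeneousComponent k p) := by
  induction p using MvPolynomial.induction_on' with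
  | monomial α c =>
    rw [restrictLine_monomial, Polynomial.coeff_C_mul_X_pow,
      homogeneousComponent_of_mem (isHomogeneous_monomial c rfl)]
    split_ifs <;> simp
  | add p q hp hq => simp [hp, hq]

theorem eval_restrictLine (v : σ → R) (p : MvPolynomial σ R) (t : R) :
    (restrictLine v p).eval t = eval (t • v) p := by
  have : (Polynomial.aeval t).comp (restrictLine v) = aeval (t • v) :=
    algHom_ext fun i => by simp [restrictLine]; ring
  rw [← Polynomial.coe_aeval_eq_eval, ← AlgHom.comp_apply, this]
  rfl

theorem natDegree_restrictLine_le (v : σ → R) (p : MvPolynomial σ R) :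
    (restrictLine v p).natDegree ≤ p.totalDegree :=
  Polynomial.natDegree_le_iff_coeff_eq_zero.2 fun k hk => by
    rw [coeff_restrictLine, homogeneousComponent_eq_zero _ _ hk, map_zero]

theorem homogeneousComponent_totalDegree_ne_zero {p : MvPolynomial σ R} (hp : p ≠ 0) :
    homogeneousComponent p.totalDegree p ≠ 0 := by
  obtain ⟨α, hα, hdeg⟩ := Finset.exists_mem_eq_sup p.support (support_nonempty.2 hp)
    fun α => α.sum fun _ e => e
  intro h
  have := congrArg (coeff α) h
  rw [coeff_homogeneousComponent, if_pos (by rw [totalDegree, hdeg]; rfl), coeff_zero] at this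
  exact mem_support_iff.1 hα this

end CommSemiring

theorem exists_natDegree_restrictLine_eq {R : Type*} [CommRing R] [IsDomain R] [Infinite R]
    {p : MvPolynomial σ R} (hp : p ≠ 0) : ∃ v, (restrictLine v p).natDegree = p.totalDegree := by
  obtain ⟨v, hv⟩ : ∃ v, eval v (homogeneousComponent p.totalDegree p) ≠ 0 := by
    by_contra! h
    exact homogeneousComponent_totalDegree_ne_zero hp
      (MvPolynomial.funext fun x => by rw [h x, map_zero])
  exact ⟨v, (natDegree_restrictLine_le v p).antisymm
    (Polynomial.le_natDegree_of_ne_zero (by rwa [coeff_restrictLine]))⟩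

theorem totalDegree_le_of_forall_eval_nonneg_of_le {p q : MvPolynomial σ ℝ}
    (hp : ∀ x, 0 ≤ eval x p) (hpq : ∀ x, eval x p ≤ eval x q) :
    p.totalDegree ≤ q.totalDegree := by
  rcases eq_or_ne p 0 with rfl | hp0
  · simp
  obtain ⟨v, hv⟩ := exists_natDegree_restrictLine_eq hp0
  calc p.totalDegree = (restrictLine v p).natDegree := hv.symm
    _ ≤ (restrictLine v q).natDegree :=
      Polynomial.natDegree_le_of_forall_eval_nonneg_of_le (by simp [eval_restrictLine, hp])
        (by simp [eval_restrictLine, hpq])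
    _ ≤ q.totalDegree := natDegree_restrictLine_le v q

theorem totalDegree_mul_le_of_forall_eval_nonneg_of_le {p q : MvPolynomial σ ℝ}
    (hp : ∀ x, 0 ≤ eval x p) (hpq : ∀ x, eval x p ≤ eval x q) (r : MvPolynomial σ ℝ) :
    (p * r).totalDegree ≤ (q * r).totalDegree := by
  rcases eq_or_ne p 0 with rfl | hp0
  · simp
  rcases eq_or_ne r 0 with rfl | hr0
  · simp
  have hq0 : q ≠ 0 := by
    rintro rfl
    exact hp0 (MvPolynomial.funext fun x => (hpq x).antisymm (by simpa using hp x))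
  rw [totalDegree_mul_of_isDomain hp0 hr0, totalDegree_mul_of_isDomain hq0 hr0]
  exact Nat.add_le_add_right (totalDegree_le_of_forall_eval_nonneg_of_le hp hpq) _

theorem totalDegree_summand_mul_le {ι : Type*} [Fintype ι] {μ : ι → ℝ}
    {p : ι → MvPolynomial σ ℝ} (hμ : ∀ i, 0 ≤ μ i) (hp : ∀ i x, 0 ≤ eval x (p i))
    (r : MvPolynomial σ ℝ) {i : ι} (hi : 0 < μ i) :
    (p i * r).totalDegree ≤ ((∑ j, C (μ j) * p j) * r).totalDegree := by
  have hle : ∀ x, eval x (p i) ≤ eval x (C (μ i)⁻¹ * ∑ j, C (μ j) * p j) := fun x => by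
    rw [map_mul, eval_C, le_inv_mul_iff₀ hi, map_sum]
    simpa using Finset.single_le_sum (f := fun j => μ j * eval x (p j))
      (fun j _ => mul_nonneg (hμ j) (hp j x)) (Finset.mem_univ i)
  calc (p i * r).totalDegree ≤ ((C (μ i)⁻¹ * ∑ j, C (μ j) * p j) * r).totalDegree :=
        totalDegree_mul_le_of_forall_eval_nonneg_of_le (hp i) hle r
    _ ≤ ((∑ j, C (μ j) * p j) * r).totalDegree := by
        rw [mul_assoc, C_mul']
        exact totalDegree_smul_le _ _

theorem finrank_restrictTotalDegree_le (K : Type*) [Field K] (n d : ℕ) :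
    Module.finrank K (restrictTotalDegree (Fin n) K d) ≤ (n + d).choose d := by
  let slack : {α : Fin n →₀ ℕ // (α.sum fun _ e => e) ≤ d} →
      (univ : Finset (Fin (n + 1))).finsuppAntidiag d := fun α =>
    ⟨Finsupp.cons (d - α.1.sum fun _ e => e) α.1, by
      refine mem_finsuppAntidiag.2 ⟨?_, subset_univ _⟩
      rw [Fin.sum_univ_succ]
      simp only [Finsupp.cons_zero, Finsupp.cons_succ]
      rw [← Finsupp.sum_fintype _ (fun _ e => e) fun _ => rfl]
      exact Nat.sub_add_cancel α.2⟩
  have hslack : Function.Injective slack := fun α β h =>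
    Subtype.ext (Finsupp.cons_injective2 (congrArg Subtype.val h)).2
  rw [restrictTotalDegree, Module.finrank_eq_nat_card_basis (basisRestrictSupport K _)]
  calc Nat.card _ ≤ Nat.card ((univ : Finset (Fin (n + 1))).finsuppAntidiag d) :=
        Nat.card_le_card_of_injective slack hslack
    _ = (n + d).choose d := by
        rw [Nat.card_eq_fintype_card, Fintype.card_coe, card_finsuppAntidiag_nat_eq_choose]
        simp [Nat.add_right_comm n 1 d]

end MvPolynomial

theorem vectorSpan_le_of_subset {k E : Type*} [Ring k] [AddCommGroup E] [Module k E]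
    {V : Submodule k E} {s : Set E} (hs : s ⊆ V) : vectorSpan k s ≤ V := by
  rw [vectorSpan_def, Submodule.span_le]
  rintro _ ⟨a, ha, b, hb, rfl⟩
  exact V.sub_mem (hs ha) (hs hb)

theorem exists_nonneg_combination_card_le_finrank_add_one {E ι : Type*} [AddCommGroup E]
    [Module ℝ E] (V : Submodule ℝ E) [FiniteDimensional ℝ V] {s : Set E} (hsV : s ⊆ V)
    [Fintype ι] {c : ι → ℝ} {z : ι → E} (hc : ∀ i, 0 ≤ c i) (hz : ∀ i, 0 < c i → z i ∈ s) :
    ∃ N ≤ Module.finrank ℝ V + 1, ∃ (w : Fin N → ℝ) (y : Fin N → E),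
      (∀ j, 0 ≤ w j) ∧ (∀ j, y j ∈ s) ∧ ∑ i, c i • z i = ∑ j, w j • y j := by
  set t := univ.filter fun i => 0 < c i
  have hsum : ∑ i, c i • z i = ∑ i ∈ t, c i • z i :=
    (sum_filter_of_ne fun i _ h => (hc i).lt_of_ne' fun h0 => h (by simp [h0])).symm
  rcases t.eq_empty_or_nonempty with ht | ht
  · exact ⟨0, Nat.zero_le _, Fin.elim0, Fin.elim0, Fin.rec0, Fin.rec0, by simp [hsum, ht]⟩
  set S := ∑ i ∈ t, c i
  have hS : 0 < S := sum_pos (fun i hi => (mem_filter.1 hi).2) ht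
  obtain ⟨κ, _, y, w, hys, hyind, hwpos, -, hwy⟩ := eq_pos_convex_span_of_mem_convexHull
    (t.centerMass_mem_convexHull (fun i _ => hc i) hS fun i hi => hz i (mem_filter.1 hi).2)
  let e := Fintype.equivFin κ
  refine ⟨Fintype.card κ, ?_, fun j => S * w (e.symm j), fun j => y (e.symm j),
    fun j => (mul_pos hS (hwpos _)).le, fun j => hys ⟨_, rfl⟩, ?_⟩
  · exact hyind.card_le_finrank_succ.trans
      (Nat.add_le_add_right (Submodule.finrank_mono (vectorSpan_le_of_subset (hys.trans hsV))) 1)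
  · rw [hsum, ← smul_inv_smul₀ hS.ne' (∑ i ∈ t, c i • z i), ← centerMass, ← hwy, smul_sum,
      ← e.symm.sum_comp]
    simp only [mul_smul]

theorem short_degree_d_SONC_certificate_general
    (n d : ℕ) (a b : Fin n → ℝ)
    (P : Finset (MvPolynomial (Fin n) ℝ))
    (f : MvPolynomial (Fin n) ℝ)
    (hcert : ∃ (N : ℕ) (s Hp : Fin N → MvPolynomial (Fin n) ℝ),
      (∀ j, IsSONC n (s j)) ∧
      (∀ j, ∃ L : List (MvPolynomial (Fin n) ℝ),
        (∀ q ∈ L, q ∈ certFamily a b P) ∧ Hp j = L.prod) ∧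
      (∀ j, (s j * Hp j).totalDegree ≤ d) ∧
      f = ∑ j, s j * Hp j) :
    ∃ (N : ℕ) (k : Fin N → ℕ)
      (μ : (j : Fin N) → Fin (k j) → ℝ)
      (q : (j : Fin N) → Fin (k j) → MvPolynomial (Fin n) ℝ)
      (Hp : Fin N → MvPolynomial (Fin n) ℝ),
      (∀ j i, 0 ≤ μ j i) ∧
      (∀ j i, IsNNCircuit n (q j i)) ∧
      (∀ j, ∃ L : List (MvPolynomial (Fin n) ℝ),
        (∀ r ∈ L, r ∈ certFamily a b P) ∧ Hp j = L.prod) ∧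
      (∀ j, ((∑ i, C (μ j i) * q j i) * Hp j).totalDegree ≤ d) ∧
      (∑ j, k j) ≤ Nat.choose (4 * n + P.card + d) d * (Nat.choose (n + d) d + 1) ∧
      f = ∑ j, (∑ i, C (μ j i) * q j i) * Hp j := by
  obtain ⟨N₀, s, H, hs, hH, hdeg, rfl⟩ := hcert
  choose k μ p hμ hp hsp using hs
  set A : Set (MvPolynomial (Fin n) ℝ) := {r | r.totalDegree ≤ d ∧ ∃ q h, IsNNCircuit n q ∧
    (∃ L : List (MvPolynomial (Fin n) ℝ), (∀ x ∈ L, x ∈ certFamily a b P) ∧ h = L.prod) ∧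
    r = q * h}
  have hA : A ⊆ restrictTotalDegree (Fin n) ℝ d := fun r hr =>
    (mem_restrictTotalDegree _ _ _).2 hr.1
  have hterm : ∀ t : (j : Fin N₀) × Fin (k j), 0 < μ t.1 t.2 → p t.1 t.2 * H t.1 ∈ A :=
    fun ⟨j, i⟩ hi => ⟨(totalDegree_summand_mul_le (hμ j) (fun i => (hp j i).2) (H j)
      hi).trans (hsp j ▸ hdeg j), p j i, H j, hp j i, hH j, rfl⟩
  have hsum : ∑ j, s j * H j = ∑ t : (j : Fin N₀) × Fin (k j), μ t.1 t.2 • (p t.1 t.2 * H t.1) := by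
    rw [Fintype.sum_sigma]
    simp [hsp, sum_mul, smul_eq_C_mul, mul_assoc]
  obtain ⟨N, hN, w, y, hw, hy, hwy⟩ := exists_nonneg_combination_card_le_finrank_add_one _ hA
    (ι := (j : Fin N₀) × Fin (k j)) (c := fun t => μ t.1 t.2) (z := fun t => p t.1 t.2 * H t.1)
    (fun t => hμ t.1 t.2) hterm
  choose hyd q h hq hh hyqh using hy
  refine ⟨N, fun _ => 1, fun j _ => w j, fun j _ => q j, h, fun j _ => hw j, fun j _ => hq j, hh,
    fun j => ?_, ?_, ?_⟩
  · simp only [Fin.sum_univ_one]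
    rw [mul_assoc, C_mul', ← hyqh]
    exact (totalDegree_smul_le _ _).trans (hyd j)
  · calc ∑ _ : Fin N, 1 = N := by simp
      _ ≤ (n + d).choose d + 1 :=
        hN.trans (Nat.add_le_add_right (finrank_restrictTotalDegree_le ℝ n d) 1)
      _ ≤ _ := Nat.le_mul_of_pos_left _ (Nat.choose_pos (Nat.le_add_left d _))
  · rw [hsum, hwy]
    simp [hyqh, smul_eq_C_mul, mul_assoc]

/-- If `f` admits a degree `d` SONC certificate over the
constrained hypercube, then it admits one of the same form in which the total
number of nonnegative circuit polynomials appearing across all the SONCs is at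
most `C(4n + m + d, d)·(C(n + d, d) + 1)`, where `m = |P|`. -/
theorem short_degree_d_SONC_certificate
    (n d : ℕ) (a b : Fin n → ℝ) (hab : ∀ j, a j < b j)
    (P : Finset (MvPolynomial (Fin n) ℝ)) (hP : ∀ p ∈ P, p.totalDegree ≤ d)
    (f : MvPolynomial (Fin n) ℝ)
    (hcert : ∃ (N : ℕ) (s Hp : Fin N → MvPolynomial (Fin n) ℝ),
      (∀ j, IsSONC n (s j)) ∧
      (∀ j, ∃ L : List (MvPolynomial (Fin n) ℝ),
        (∀ q ∈ L, q ∈ certFamily a b P) ∧ Hp j = L.prod) ∧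
      (∀ j, (s j * Hp j).totalDegree ≤ d) ∧
      f = ∑ j, s j * Hp j) :
    ∃ (N : ℕ) (k : Fin N → ℕ)
      (μ : (j : Fin N) → Fin (k j) → ℝ)
      (q : (j : Fin N) → Fin (k j) → MvPolynomial (Fin n) ℝ)
      (Hp : Fin N → MvPolynomial (Fin n) ℝ),
      (∀ j i, 0 ≤ μ j i) ∧
      (∀ j i, IsNNCircuit n (q j i)) ∧
      (∀ j, ∃ L : List (MvPolynomial (Fin n) ℝ),
        (∀ r ∈ L, r ∈ certFamily a b P) ∧ Hp j = L.prod) ∧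
      (∀ j, ((∑ i, C (μ j i) * q j i) * Hp j).totalDegree ≤ d) ∧
      (∑ j, k j) ≤ Nat.choose (4 * n + P.card + d) d * (Nat.choose (n + d) d + 1) ∧
      f = ∑ j, (∑ i, C (μ j i) * q j i) * Hp j :=
  short_degree_d_SONC_certificate_general n d a b P f hcert
end
end

section
/- Let n ≥ 2, let s be a circuit polynomial in n variables, let c ≥ 0, σ ∈ {−1, 1}, i ∈ [n], and set ℓ(x) = 1 + c + σx_i. Then the polynomial s·ℓ attains at most four distinct values on the boolean hypercube {−1,1}ⁿ, and every value it attains on {−1,1}ⁿ is attained at at least 2^{n−2} points of {−1,1}ⁿ. -/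
open MvPolynomial Finset
open scoped Classical

noncomputable section

/-- The vertex of the boolean hypercube `{−1,1}ⁿ` encoded by `ε : Fin n → Bool`. -/
def bvtx (n : ℕ) (ε : Fin n → Bool) : Fin n → ℝ :=
  fun j => if ε j then 1 else -1

section AuxCube

lemma bvtx_mem (n : ℕ) (ε : Fin n → Bool) (j : Fin n) :
    bvtx n ε j = 1 ∨ bvtx n ε j = -1 := by
  unfold bvtx; by_cases h : ε j <;> simp [h]

lemma bvtx_pow_even {n : ℕ} {ε : Fin n → Bool} {j : Fin n} {e : ℕ} (he : Even e) :
    bvtx n ε j ^ e = 1 := by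
  rcases bvtx_mem n ε j with h | h <;> rw [h]
  · exact one_pow e
  · exact he.neg_one_pow

lemma bvtx_pow_odd {n : ℕ} {ε : Fin n → Bool} {j : Fin n} {e : ℕ} (he : Odd e) :
    bvtx n ε j ^ e = bvtx n ε j := by
  rcases bvtx_mem n ε j with h | h <;> rw [h]
  · exact one_pow e
  · exact he.neg_one_pow

/-- The sign `∏ j x_j^{β_j}` of a monomial at a vertex of the cube. -/
def Msign (n : ℕ) (β : Fin n →₀ ℕ) (ε : Fin n → Bool) : ℝ :=
  ∏ j, bvtx n ε j ^ (β j)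

lemma Msign_mem (n : ℕ) (β : Fin n →₀ ℕ) (ε : Fin n → Bool) :
    Msign n β ε = 1 ∨ Msign n β ε = -1 := by
  unfold Msign
  refine Finset.prod_induction _ (fun x => x = 1 ∨ x = -1) ?_ (Or.inl rfl) ?_
  · rintro a b (rfl | rfl) (rfl | rfl) <;> norm_num
  · intro j _
    rcases Nat.even_or_odd (β j) with he | ho
    · exact Or.inl (bvtx_pow_even he)
    · rw [bvtx_pow_odd ho]; exact bvtx_mem n ε j

lemma Msign_congr {n : ℕ} {β : Fin n →₀ ℕ} {ε₁ ε₂ : Fin n → Bool}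
    (h : ∀ j, Odd (β j) → ε₁ j = ε₂ j) : Msign n β ε₁ = Msign n β ε₂ := by
  unfold Msign
  refine Finset.prod_congr rfl fun j _ => ?_
  rcases Nat.even_or_odd (β j) with he | ho
  · rw [bvtx_pow_even he, bvtx_pow_even he]
  · rw [bvtx_pow_odd ho, bvtx_pow_odd ho]
    unfold bvtx; rw [h j ho]

lemma Msign_flip {n : ℕ} {β : Fin n →₀ ℕ} {j0 : Fin n} (ho : Odd (β j0))
    (δ : Fin n → Bool) :
    Msign n β (Function.update δ j0 true) = - Msign n β (Function.update δ j0 false) := by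
  unfold Msign
  rw [← Finset.mul_prod_erase Finset.univ
        (fun j => bvtx n (Function.update δ j0 true) j ^ (β j)) (Finset.mem_univ j0),
      ← Finset.mul_prod_erase Finset.univ
        (fun j => bvtx n (Function.update δ j0 false) j ^ (β j)) (Finset.mem_univ j0)]
  have hrest : ∏ j ∈ Finset.univ.erase j0, bvtx n (Function.update δ j0 true) j ^ (β j)
      = ∏ j ∈ Finset.univ.erase j0, bvtx n (Function.update δ j0 false) j ^ (β j) := by
    refine Finset.prod_congr rfl fun j hj => ?_
    have hne : j ≠ j0 := (Finset.mem_erase.mp hj).1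
    have : Function.update δ j0 true j = Function.update δ j0 false j := by
      rw [Function.update_of_ne hne, Function.update_of_ne hne]
    unfold bvtx; rw [this]
  rw [hrest, bvtx_pow_odd ho, bvtx_pow_odd ho]
  have h1 : bvtx n (Function.update δ j0 true) j0 = 1 := by
    simp [bvtx, Function.update_self]
  have h2 : bvtx n (Function.update δ j0 false) j0 = -1 := by
    simp [bvtx, Function.update_self]
  rw [h1, h2]; ring

end AuxCube

/-- For `n ≥ 2`, a circuit polynomial `s`, `c ≥ 0`, `σ ∈ {−1,1}`,
`i ∈ [n]` and `ℓ(x) = 1 + c + σx_i`, the polynomial `s·ℓ` attains at most four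
distinct values on `{−1,1}ⁿ`, and every value it attains on `{−1,1}ⁿ` is
attained at at least `2^{n−2}` points. -/
theorem circuit_times_box_constraint_four_values_on_cube
    (n : ℕ) (hn : 2 ≤ n) (s : MvPolynomial (Fin n) ℝ) (hs : IsCircuitPoly n s)
    (c : ℝ) (hc : 0 ≤ c) (σ : ℝ) (hσ : σ = 1 ∨ σ = -1) (i : Fin n) :
    (Finset.univ.image (fun ε : Fin n → Bool =>
        eval (bvtx n ε) s * (1 + c + σ * bvtx n ε i))).card ≤ 4 ∧
    (∀ u ∈ Finset.univ.image (fun ε : Fin n → Bool =>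
        eval (bvtx n ε) s * (1 + c + σ * bvtx n ε i)),
      2 ^ (n - 2) ≤ (Finset.univ.filter (fun ε : Fin n → Bool =>
        eval (bvtx n ε) s * (1 + c + σ * bvtx n ε i) = u)).card) := by
  classical
  obtain ⟨r, α, β, cf, c₀, lam, hrn, hcf, hαeven, haff, hlam, hlamsum, hβ, hf⟩ := hs
  set S : ℝ := ∑ j, cf j with hS
  have heval : ∀ ε : Fin n → Bool,
      eval (bvtx n ε) s = S + c₀ * Msign n β ε := by
    intro ε
    rw [hf]
    rw [map_add, map_sum]
    congr 1
    · rw [hS]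
      refine Finset.sum_congr rfl fun j _ => ?_
      rw [eval_monomial, Finsupp.prod_fintype _ _ (fun k => pow_zero _)]
      rw [Finset.prod_congr rfl fun k _ => bvtx_pow_even (hαeven j k)]
      simp
    · rw [eval_monomial, Finsupp.prod_fintype _ _ (fun k => pow_zero _)]
      rfl
  have hkey : ∀ ε : Fin n → Bool,
      eval (bvtx n ε) s * (1 + c + σ * bvtx n ε i)
        = (S + c₀ * Msign n β ε) * (1 + c + σ * (if ε i then (1:ℝ) else -1)) := by
    intro ε; rw [heval]; rfl
  set w : ℝ × Bool → ℝ :=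
    fun p => (S + c₀ * p.1) * (1 + c + σ * (if p.2 then (1:ℝ) else -1)) with hw
  constructor
  · have himg : (Finset.univ.image fun ε : Fin n → Bool =>
        eval (bvtx n ε) s * (1 + c + σ * bvtx n ε i))
        = (Finset.univ.image fun ε : Fin n → Bool =>
            ((Msign n β ε, ε i) : ℝ × Bool)).image w := by
      rw [Finset.image_image]
      exact Finset.image_congr fun ε _ => hkey ε
    rw [himg]
    refine le_trans Finset.card_image_le ?_
    refine le_trans (Finset.card_le_card
      (t := ({1, -1} : Finset ℝ) ×ˢ (Finset.univ : Finset Bool)) ?_) ?_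
    · intro p hp
      simp only [Finset.mem_image] at hp
      obtain ⟨ε, -, rfl⟩ := hp
      simp only [Finset.mem_product, Finset.mem_insert, Finset.mem_singleton]
      exact ⟨Msign_mem n β ε, Finset.mem_univ _⟩
    · rw [Finset.card_product]
      norm_num
  · intro u hu
    obtain ⟨ε₀, -, hε₀⟩ := Finset.mem_image.mp hu
    obtain ⟨j0, hj0i, hj0⟩ : ∃ j0 : Fin n, j0 ≠ i ∧
        (¬ Odd (β j0) → ∀ j, Odd (β j) → j = i) := by
      by_cases hT : ∃ j, j ≠ i ∧ Odd (β j)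
      · obtain ⟨j0, h1, h2⟩ := hT; exact ⟨j0, h1, fun h => absurd h2 h⟩
      · push_neg at hT
        have h1 : 1 < Fintype.card (Fin n) := by simp; omega
        obtain ⟨j0, hj0⟩ := Fintype.exists_ne_of_one_lt_card h1 i
        exact ⟨j0, hj0, fun _ j hj => by
          by_contra hji; exact (hT j hji) hj⟩
    set g₀ : (({x : Fin n // x ≠ i ∧ x ≠ j0}) → Bool) → (Fin n → Bool) :=
      fun h x => if hx : x = i then ε₀ i else if hx2 : x = j0 then false
                 else h ⟨x, hx, hx2⟩ with hg₀
    have hg₀i : ∀ h, g₀ h i = ε₀ i := fun h => by simp [hg₀]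
    have hg₀j0 : ∀ h, g₀ h j0 = false := fun h => by simp [hg₀, hj0i]
    have hg₀x : ∀ h x (hx : x ≠ i ∧ x ≠ j0), g₀ h x = h ⟨x, hx⟩ := fun h x hx => by
      simp [hg₀, hx.1, hx.2]
    set g : (({x : Fin n // x ≠ i ∧ x ≠ j0}) → Bool) → (Fin n → Bool) :=
      fun h => if Msign n β (g₀ h) = Msign n β ε₀ then g₀ h
               else Function.update (g₀ h) j0 true with hg
    have hgx : ∀ h x, x ≠ j0 → g h x = g₀ h x := by
      intro h x hx
      by_cases hM : Msign n β (g₀ h) = Msign n β ε₀ <;>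
        simp [hg, hM, Function.update_of_ne hx]
    have hgmem : ∀ h, Msign n β (g h) = Msign n β ε₀ ∧ g h i = ε₀ i := by
      intro h
      have hgi : g h i = ε₀ i := by rw [hgx h i (Ne.symm hj0i), hg₀i]
      refine ⟨?_, hgi⟩
      by_cases hM : Msign n β (g₀ h) = Msign n β ε₀
      · rw [show g h = g₀ h from by simp [hg, hM]]; exact hM
      · have hodd : Odd (β j0) := by
          by_contra hev
          exact hM (Msign_congr fun j hj => by rw [hj0 hev j hj, hg₀i])
        have hgh : g h = Function.update (g₀ h) j0 true := by simp [hg, hM]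
        have hfalse : Function.update (g₀ h) j0 false = g₀ h := by
          have h2 := Function.update_eq_self j0 (g₀ h)
          rw [hg₀j0 h] at h2
          exact h2
        rw [hgh, Msign_flip hodd, hfalse]
        rcases Msign_mem n β (g₀ h) with h1 | h1 <;>
          rcases Msign_mem n β ε₀ with h2 | h2 <;> rw [h1, h2] <;>
          first
            | (exfalso; exact hM (h1.trans h2.symm))
            | norm_num
    have hginj : Set.InjOn g
        ((Finset.univ : Finset (({x : Fin n // x ≠ i ∧ x ≠ j0}) → Bool)) : Set _) := by
      intro h1 _ h2 _ hgh
      funext x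
      obtain ⟨x, hx⟩ := x
      have hcx := congrFun hgh x
      rw [hgx h1 x hx.2, hgx h2 x hx.2, hg₀x h1 x hx, hg₀x h2 x hx] at hcx
      exact hcx
    have hsub : ∀ h, g h ∈ Finset.univ.filter (fun ε : Fin n → Bool =>
        eval (bvtx n ε) s * (1 + c + σ * bvtx n ε i) = u) := by
      intro h
      simp only [Finset.mem_filter, Finset.mem_univ, true_and]
      rw [hkey, (hgmem h).1, (hgmem h).2, ← hkey, hε₀]
    have hDcard : Fintype.card {x : Fin n // x ≠ i ∧ x ≠ j0} = n - 2 := by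
      rw [Fintype.card_subtype]
      have h1 : (Finset.univ.filter fun x : Fin n => x ≠ i ∧ x ≠ j0)
          = Finset.univ \ {i, j0} := by
        ext x; simp [not_or, and_comm]
      rw [h1, Finset.card_sdiff_of_subset (Finset.subset_univ _), Finset.card_univ, Fintype.card_fin]
      congr 1
      rw [Finset.card_insert_of_notMem (by simp [Ne.symm hj0i]), Finset.card_singleton]
    calc (2:ℕ) ^ (n - 2)
        = (Finset.univ : Finset (({x : Fin n // x ≠ i ∧ x ≠ j0}) → Bool)).card := by
          rw [Finset.card_univ, Fintype.card_fun, hDcard, Fintype.card_bool]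
      _ ≤ _ := Finset.card_le_card_of_injOn g (fun h _ => hsub h) hginj
end
end

section
/- Let s be a nonnegative circuit polynomial in n variables (n ≥ 1). Then for every vertex v ∈ {−1,1}ⁿ it holds that Σ_{x ∈ {−1,1}ⁿ} s(x) ≥ 2^{n−1}·s(v). -/
open MvPolynomial Finset
open scoped Classical

noncomputable section

/-- For a nonnegative circuit polynomial `s` in `n ≥ 1` variables
and every vertex `v ∈ {−1,1}ⁿ`, one has `Σ_{x ∈ {−1,1}ⁿ} s(x) ≥ 2^{n−1}·s(v)`. -/
theorem sum_over_cube_ge_half_cube_times_value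
    (n : ℕ) (hn : 1 ≤ n) (s : MvPolynomial (Fin n) ℝ) (hs : IsNNCircuit n s)
    (v : Fin n → Bool) :
    (2 : ℝ) ^ (n - 1) * eval (bvtx n v) s ≤
      ∑ ε : Fin n → Bool, eval (bvtx n ε) s := by
  classical
  obtain ⟨hc, hnn⟩ := hs
  obtain ⟨r, α, β, cf, c, lam, -, hcf, hαeven, -, -, -, -, hf⟩ := hc
  set S : ℝ := ∑ j, cf j with hSdef
  have hbv : ∀ (ε : Fin n → Bool) i, bvtx n ε i = 1 ∨ bvtx n ε i = -1 := by
    intro ε i; unfold bvtx; by_cases h : ε i <;> simp [h]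
  set G : (Fin n → Bool) → ℝ := fun ε => ∏ i, (bvtx n ε i) ^ (β i) with hGdef
  have heval : ∀ ε : Fin n → Bool, eval (bvtx n ε) s = S + c * G ε := by
    intro ε
    rw [hf]
    simp only [map_add, map_sum, eval_monomial]
    congr 1
    · rw [hSdef]
      apply Finset.sum_congr rfl
      intro j _
      have h1 : ∀ i, (bvtx n ε i) ^ (α j i) = 1 := by
        intro i
        rcases hbv ε i with h | h <;> rw [h]
        · simp
        · exact (hαeven j i).neg_one_pow
      rw [Finsupp.prod_pow]
      simp [h1]
    · rw [Finsupp.prod_pow, hGdef]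
  have hcard : Fintype.card (Fin n → Bool) = 2 ^ n := by
    simp [Fintype.card_fun]
  by_cases hodd : ∃ i0, Odd (β i0)
  · obtain ⟨i0, hi0⟩ := hodd
    set τ : (Fin n → Bool) → (Fin n → Bool) :=
      fun ε => Function.update ε i0 (!ε i0) with hτdef
    have hτinv : Function.Involutive τ := by
      intro ε
      funext i
      by_cases h : i = i0
      · subst h; simp [hτdef, Function.update_self]
      · simp [hτdef, Function.update_of_ne h]
    have hGτ : ∀ ε, G (τ ε) = - G ε := by
      intro ε
      have hfac : ∀ i, (bvtx n (τ ε) i) ^ (β i) =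
          (if i = i0 then (-1 : ℝ) else 1) * (bvtx n ε i) ^ (β i) := by
        intro i
        by_cases h : i = i0
        · subst h
          have hb : bvtx n (τ ε) i = - bvtx n ε i := by
            unfold bvtx
            simp only [hτdef, Function.update_self]
            cases hε : ε i <;> simp [hε]
          rw [hb, hi0.neg_pow]
          simp
        · have hb : bvtx n (τ ε) i = bvtx n ε i := by
            unfold bvtx
            simp [hτdef, Function.update_of_ne h]
          rw [hb]
          simp [h]
      rw [hGdef]
      simp only
      calc (∏ i, (bvtx n (τ ε) i) ^ (β i))
          = ∏ i, (if i = i0 then (-1 : ℝ) else 1) * (bvtx n ε i) ^ (β i) :=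
            Finset.prod_congr rfl (fun i _ => hfac i)
        _ = (∏ i, (if i = i0 then (-1 : ℝ) else 1)) * ∏ i, (bvtx n ε i) ^ (β i) :=
            Finset.prod_mul_distrib
        _ = - G ε := by
            rw [Finset.prod_ite_eq' Finset.univ i0 (fun _ => (-1 : ℝ))]
            simp [hGdef]
    have hpair : ∀ ε, eval (bvtx n (τ ε)) s = 2 * S - eval (bvtx n ε) s := by
      intro ε
      rw [heval, heval, hGτ]
      ring
    -- sum equals 2^n * S
    have hsum : (∑ ε : Fin n → Bool, eval (bvtx n ε) s) = 2 ^ n * S := by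
      have hsame : (∑ ε : Fin n → Bool, eval (bvtx n ε) s)
          = ∑ ε : Fin n → Bool, eval (bvtx n (τ ε)) s :=
        (Fintype.sum_equiv hτinv.toPerm _ _ (fun ε => rfl)).symm
      have h2 : 2 * (∑ ε : Fin n → Bool, eval (bvtx n ε) s)
          = ∑ ε : Fin n → Bool, (2 * S) := by
        calc 2 * (∑ ε : Fin n → Bool, eval (bvtx n ε) s)
            = (∑ ε : Fin n → Bool, eval (bvtx n ε) s)
              + ∑ ε : Fin n → Bool, eval (bvtx n (τ ε)) s := by
                rw [← hsame]; ring
          _ = ∑ ε : Fin n → Bool, (eval (bvtx n ε) s + eval (bvtx n (τ ε)) s) := by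
                rw [Finset.sum_add_distrib]
          _ = ∑ ε : Fin n → Bool, (2 * S) := by
                apply Finset.sum_congr rfl
                intro ε _
                rw [hpair]; ring
      have h3 : (∑ ε : Fin n → Bool, (2 * S : ℝ)) = 2 ^ n * (2 * S) := by
        rw [Finset.sum_const, Finset.card_univ, hcard, nsmul_eq_mul]
        push_cast
        ring
      rw [h3] at h2
      linarith
    have hvle : eval (bvtx n v) s ≤ 2 * S := by
      have := hnn (bvtx n (τ v))
      rw [hpair v] at this
      linarith
    rw [hsum]
    have h2n : (2 : ℝ) ^ (n - 1) * (2 * S) = 2 ^ n * S := by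
      have hp : (2 : ℝ) ^ n = 2 ^ (n - 1) * 2 := by
        conv_lhs => rw [← Nat.succ_pred_eq_of_pos hn]
        rw [pow_succ, Nat.pred_eq_sub_one]
      rw [hp]; ring
    calc (2 : ℝ) ^ (n - 1) * eval (bvtx n v) s
        ≤ (2 : ℝ) ^ (n - 1) * (2 * S) := by
          apply mul_le_mul_of_nonneg_left hvle (by positivity)
      _ = 2 ^ n * S := h2n
  · -- all β i even
    push_neg at hodd
    simp only [Nat.not_odd_iff_even] at hodd
    have hG1 : ∀ ε, G ε = 1 := by
      intro ε
      rw [hGdef]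
      apply Finset.prod_eq_one
      intro i _
      rcases hbv ε i with h | h <;> rw [h]
      · simp
      · exact (hodd i).neg_one_pow
    have hconst : ∀ ε, eval (bvtx n ε) s = S + c := by
      intro ε; rw [heval, hG1]; ring
    have hpos : 0 ≤ S + c := by
      have := hnn (bvtx n v)
      rw [hconst v] at this
      exact this
    have hsum : (∑ ε : Fin n → Bool, eval (bvtx n ε) s) = 2 ^ n * (S + c) := by
      rw [Finset.sum_congr rfl (fun ε _ => hconst ε), Finset.sum_const,
        Finset.card_univ, hcard, nsmul_eq_mul]
      push_cast
      ring
    rw [hsum, hconst v]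
    have hle : (2 : ℝ) ^ (n - 1) ≤ 2 ^ n :=
      pow_le_pow_right₀ (by norm_num) (Nat.sub_le n 1)
    exact mul_le_mul_of_nonneg_right hle hpos
end
end

section
/- Let n ≥ 2, let s be a nonnegative circuit polynomial in n variables, let c ≥ 0, σ ∈ {−1, 1}, i ∈ [n], and set ℓ(x) = 1 + c + σx_i. Then for every vertex v ∈ {−1,1}ⁿ it holds that Σ_{x ∈ {−1,1}ⁿ} s(x)ℓ(x) ≥ 2^{n−2}·s(v)ℓ(v). -/
open MvPolynomial Finset
open scoped Classical

noncomputable section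

section Aux

variable {n : ℕ}

/-- Flip coordinate `j` of a boolean vector. -/
def flipb (j : Fin n) (ε : Fin n → Bool) : Fin n → Bool :=
  fun l => if l = j then !ε l else ε l

lemma flipb_invol (j : Fin n) : Function.Involutive (flipb j) := by
  intro ε; funext l; simp only [flipb]
  by_cases h : l = j <;> simp [h]

lemma bvtx_flipb_same (j : Fin n) (ε : Fin n → Bool) :
    bvtx n (flipb j ε) j = -(bvtx n ε j) := by
  simp only [bvtx, flipb, if_pos rfl]
  cases ε j <;> simp

lemma bvtx_flipb_ne {j l : Fin n} (h : l ≠ j) (ε : Fin n → Bool) :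
    bvtx n (flipb j ε) l = bvtx n ε l := by
  simp [bvtx, flipb, h]

end Aux

set_option maxHeartbeats 1600000 in
/-- For `n ≥ 2`, a nonnegative circuit polynomial `s`, `c ≥ 0`,
`σ ∈ {−1,1}`, `i ∈ [n]`, `ℓ(x) = 1 + c + σx_i`, and every vertex
`v ∈ {−1,1}ⁿ`, one has `Σ_{x ∈ {−1,1}ⁿ} s(x)ℓ(x) ≥ 2^{n−2}·s(v)ℓ(v)`. -/
theorem sum_over_cube_ge_quarter_cube_times_value
    (n : ℕ) (hn : 2 ≤ n) (s : MvPolynomial (Fin n) ℝ) (hs : IsNNCircuit n s)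
    (c : ℝ) (hc : 0 ≤ c) (σ : ℝ) (hσ : σ = 1 ∨ σ = -1) (i : Fin n)
    (v : Fin n → Bool) :
    (2 : ℝ) ^ (n - 2) * (eval (bvtx n v) s * (1 + c + σ * bvtx n v i)) ≤
      ∑ ε : Fin n → Bool, eval (bvtx n ε) s * (1 + c + σ * bvtx n ε i) := by
  obtain ⟨⟨r, α, β, cf, cb, lam, hrn, hcf, hαeven, _haff, _hlam, _hlamsum, _hβ, hfeq⟩, hnn⟩ := hs
  set A : ℝ := ∑ j, cf j with hA
  have hApos : 0 < A := Finset.sum_pos (fun j _ => hcf j) Finset.univ_nonempty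
  set m : (Fin n → Bool) → ℝ := fun ε => ∏ l, (bvtx n ε l) ^ (β l) with hmdef
  have hbv : ∀ (ε : Fin n → Bool) (l : Fin n), bvtx n ε l = 1 ∨ bvtx n ε l = -1 := by
    intro ε l; by_cases h : ε l
    · left; simp [bvtx, h]
    · right; simp [bvtx, h]
  have heval : ∀ ε : Fin n → Bool, eval (bvtx n ε) s = A + cb * m ε := by
    intro ε
    rw [hfeq, map_add, map_sum]
    congr 1
    · rw [hA]
      refine Finset.sum_congr rfl fun j _ => ?_
      rw [eval_monomial, Finsupp.prod_pow]
      have h1 : ∀ l, (bvtx n ε l) ^ (α j l) = 1 := fun l => by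
        rcases hbv ε l with h | h <;> rw [h]
        · exact one_pow _
        · exact Even.neg_one_pow (hαeven j l)
      rw [Finset.prod_congr rfl fun l _ => h1 l]
      simp
    · rw [eval_monomial, Finsupp.prod_pow]
  have hmpm : ∀ ε, m ε = 1 ∨ m ε = -1 := by
    intro ε
    refine Finset.prod_induction _ (fun t => t = 1 ∨ t = -1) ?_ (Or.inl rfl) ?_
    · rintro a b (rfl | rfl) (rfl | rfl) <;> norm_num
    · intro l _
      rcases hbv ε l with h | h <;> rw [h]
      · left; exact one_pow _
      · rcases Nat.even_or_odd (β l) with he | ho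
        · left; exact he.neg_one_pow
        · right; exact ho.neg_one_pow
  have hmflip : ∀ (j : Fin n) (ε : Fin n → Bool),
      m (flipb j ε) = (-1 : ℝ) ^ (β j) * m ε := by
    intro j ε
    rw [hmdef]
    simp only
    rw [← Finset.mul_prod_erase Finset.univ (fun l => bvtx n (flipb j ε) l ^ β l)
        (Finset.mem_univ j),
      ← Finset.mul_prod_erase Finset.univ (fun l => bvtx n ε l ^ β l) (Finset.mem_univ j)]
    rw [Finset.prod_congr rfl (fun l hl => by
      rw [bvtx_flipb_ne (Finset.ne_of_mem_erase hl)])]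
    rw [bvtx_flipb_same, neg_pow]
    ring
  have hge : ∀ ε, 0 ≤ A + cb * m ε := fun ε => (heval ε) ▸ hnn (bvtx n ε)
  have hmtop : m (fun _ => true) = 1 := by
    rw [hmdef]; simp [bvtx]
  have hAc1 : 0 ≤ A + cb := by
    have h := hge (fun _ => true); rwa [hmtop, mul_one] at h
  have hAc2 : ∀ l : Fin n, Odd (β l) → 0 ≤ A - cb := by
    intro l hl
    have h := hge (flipb l (fun _ => true))
    rw [hmflip, hmtop, mul_one, hl.neg_one_pow] at h
    linarith
  -- setup F
  set F : (Fin n → Bool) → ℝ :=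
    fun ε => eval (bvtx n ε) s * (1 + c + σ * bvtx n ε i) with hF
  show (2 : ℝ) ^ (n - 2) * F v ≤ ∑ ε, F ε
  have hFeq : ∀ ε, F ε = (A + cb * m ε) * (1 + c + σ * bvtx n ε i) := by
    intro ε; rw [hF]; simp only; rw [heval ε]
  -- choose j and prove the quadruple bound
  obtain ⟨j, hji, hquad⟩ :
      ∃ j : Fin n, j ≠ i ∧ ∀ ε, F v ≤
        F ε + F (flipb i ε) + F (flipb j ε) + F (flipb i (flipb j ε)) := by
    by_cases hex : ∃ l : Fin n, l ≠ i ∧ Odd (β l)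
    · obtain ⟨j, hji, hjodd⟩ := hex
      have h2 : 0 ≤ A - cb := hAc2 j hjodd
      refine ⟨j, hji, fun ε => ?_⟩
      have hbvj : ∀ ε' : Fin n → Bool, bvtx n (flipb j ε') i = bvtx n ε' i :=
        fun ε' => bvtx_flipb_ne (Ne.symm hji) ε'
      have hq : F ε + F (flipb i ε) + F (flipb j ε) + F (flipb i (flipb j ε))
          = 4 * A * (1 + c) := by
        simp only [hFeq, hmflip, bvtx_flipb_same, hbvj, hjodd.neg_one_pow]
        ring
      rw [hq, hFeq]
      rcases hmpm v with hmv | hmv <;> rw [hmv] <;>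
        rcases hσ with rfl | rfl <;> rcases hbv v i with hvi | hvi <;> rw [hvi] <;>
        nlinarith [mul_nonneg hc hAc1, mul_nonneg hc h2, mul_nonneg hc hApos.le]
    · push_neg at hex
      have heven : ∀ l : Fin n, l ≠ i → Even (β l) := fun l hl =>
        Nat.not_odd_iff_even.mp (hex l hl)
      have hnt : Nontrivial (Fin n) := Fin.nontrivial_iff_two_le.mpr hn
      obtain ⟨j, hji⟩ := exists_ne i
      refine ⟨j, hji, fun ε => ?_⟩
      have hbvj : ∀ ε' : Fin n → Bool, bvtx n (flipb j ε') i = bvtx n ε' i :=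
        fun ε' => bvtx_flipb_ne (Ne.symm hji) ε'
      rcases Nat.even_or_odd (β i) with hie | hio
      · -- all exponents even: m ≡ 1
        have hm1 : ∀ ε' : Fin n → Bool, m ε' = 1 := by
          intro ε'
          rw [hmdef]; simp only
          apply Finset.prod_eq_one
          intro l _
          have he : Even (β l) := by
            by_cases hl : l = i
            · exact hl ▸ hie
            · exact heven l hl
          rcases hbv ε' l with h | h <;> rw [h]
          · exact one_pow _
          · exact he.neg_one_pow
        have hq : F ε + F (flipb i ε) + F (flipb j ε) + F (flipb i (flipb j ε))
            = 4 * (A + cb) * (1 + c) := by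
          simp only [hFeq, hm1, bvtx_flipb_same, hbvj, mul_one]
          ring
        rw [hq, hFeq, hm1, mul_one]
        rcases hσ with rfl | rfl <;> rcases hbv v i with hvi | hvi <;> rw [hvi] <;>
          nlinarith [mul_nonneg hc hAc1]
      · -- β i odd
        have h2 : 0 ≤ A - cb := hAc2 i hio
        have hmx : ∀ ε' : Fin n → Bool, m ε' = bvtx n ε' i := by
          intro ε'
          have h1 : ∀ l ∈ Finset.univ, l ≠ i → bvtx n ε' l ^ β l = 1 := by
            intro l _ hl
            rcases hbv ε' l with h | h <;> rw [h]
            · exact one_pow _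
            · exact (heven l hl).neg_one_pow
          have hx : bvtx n ε' i ^ β i = bvtx n ε' i := by
            rcases hbv ε' i with h | h <;> rw [h]
            · exact one_pow _
            · rw [hio.neg_one_pow]
          rw [hmdef]; simp only
          rw [Finset.prod_eq_single i h1 (fun h => absurd (Finset.mem_univ i) h), hx]
        have hx2 : bvtx n ε i * bvtx n ε i = 1 := by
          rcases hbv ε i with h | h <;> rw [h] <;> norm_num
        have hq : F ε + F (flipb i ε) + F (flipb j ε) + F (flipb i (flipb j ε))
            = 4 * A * (1 + c) + 4 * cb * σ := by
          simp only [hFeq, hmx, bvtx_flipb_same, hbvj]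
          linear_combination (4 * cb * σ) * hx2
        rw [hq, hFeq, hmx]
        rcases hσ with rfl | rfl <;> rcases hbv v i with hvi | hvi <;> rw [hvi] <;>
          nlinarith [mul_nonneg hc hAc1, mul_nonneg hc h2, mul_nonneg hc hApos.le]
  -- sum manipulation
  have hs1 : ∑ ε, F (flipb i ε) = ∑ ε, F ε :=
    Equiv.sum_comp ((flipb_invol i).toPerm) F
  have hs2 : ∑ ε, F (flipb j ε) = ∑ ε, F ε :=
    Equiv.sum_comp ((flipb_invol j).toPerm) F
  have hs3 : ∑ ε, F (flipb i (flipb j ε)) = ∑ ε, F ε := by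
    calc ∑ ε, F (flipb i (flipb j ε)) = ∑ ε, F (flipb i ε) :=
          Equiv.sum_comp ((flipb_invol j).toPerm) (fun ε => F (flipb i ε))
      _ = ∑ ε, F ε := hs1
  have htot : (2 : ℝ) ^ n * F v ≤ 4 * ∑ ε, F ε := by
    have h := Finset.sum_le_sum (fun ε (_ : ε ∈ Finset.univ) => hquad ε)
    rw [Finset.sum_const, Finset.sum_add_distrib, Finset.sum_add_distrib,
      Finset.sum_add_distrib, hs1, hs2, hs3, Finset.card_univ] at h
    have hcard : (Fintype.card (Fin n → Bool)) = 2 ^ n := by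
      simp [Fintype.card_fun]
    rw [hcard, nsmul_eq_mul] at h
    push_cast at h
    linarith
  have hpow : (2 : ℝ) ^ n = 4 * (2 : ℝ) ^ (n - 2) := by
    have h2 : n - 2 + 2 = n := Nat.sub_add_cancel hn
    conv_lhs => rw [← h2]
    rw [pow_add]; ring
  rw [hpow] at htot
  linarith
end
end

section
/- Let n ≥ 3 and a ∈ ℝ with a > (2ⁿ − 1)/(2^{n−2} − 1). Then for every d ∈ ℕ the polynomial f_a does not belong to S_d; that is, f_a admits no representation f_a = Σ (finite) s·h with s ∈ C_{n,2d} and h ∈ {1} ∪ {x_i² − 1, 1 − x_i² : i ∈ [n]} ∪ {1 + c + x_i, 1 + c − x_i : i ∈ [n], c ∈ ℝ_{≥0}}. -/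
open MvPolynomial Finset
open scoped Classical

noncomputable section

/-- The polynomial `f_a(x) = (a − 1)·∏_{i=1}^{n} (x_i + 1)/2 + 1`. -/
def fA (n : ℕ) (a : ℝ) : MvPolynomial (Fin n) ℝ :=
  C (a - 1) * (∏ i, C (1 / 2 : ℝ) * (X i + 1)) + 1


namespace NoPutinarAux

/-- Hypercube point associated to a sign pattern. -/
def pt (n : ℕ) (b : Fin n → Bool) : Fin n → ℝ := fun i => if b i then 1 else -1

variable {n : ℕ}

lemma pt_pow (b : Fin n → Bool) (i : Fin n) (k : ℕ) :
    pt n b i ^ k = if Even k then 1 else pt n b i := by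
  rcases Nat.even_or_odd k with hk | hk
  · rw [if_pos hk]
    by_cases h : b i
    · simp [pt, h]
    · simp [pt, h, hk.neg_one_pow]
  · rw [if_neg (Nat.not_even_iff_odd.mpr hk)]
    by_cases h : b i
    · simp [pt, h]
    · simp [pt, h, hk.neg_one_pow]

lemma sum_prod_pow (e : Fin n → ℕ) :
    ∑ b : Fin n → Bool, ∏ i, pt n b i ^ e i
      = ∏ i, (if Even (e i) then (2:ℝ) else 0) := by
  have h := Fintype.prod_sum (fun (i : Fin n) (t : Bool) => (if t then (1:ℝ) else -1) ^ e i)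
  rw [show (∑ b : Fin n → Bool, ∏ i, pt n b i ^ e i)
      = ∑ b : Fin n → Bool, ∏ i, (if b i then (1:ℝ) else -1) ^ e i from rfl, ← h]
  apply Finset.prod_congr rfl
  intro i _
  rw [Fintype.sum_bool]
  rcases Nat.even_or_odd (e i) with hk | hk
  · rw [if_pos hk]
    norm_num [hk.neg_one_pow]
  · rw [if_neg (Nat.not_even_iff_odd.mpr hk)]
    norm_num [hk.neg_one_pow]

end NoPutinarAux

namespace NoPutinarAux

variable {n : ℕ}

lemma Q_all_even (e : Fin n → ℕ) (he : ∀ i, Even (e i)) :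
    ∏ i, (if Even (e i) then (2:ℝ) else 0) = 2 ^ n := by
  simp [he]

lemma Q_not_even {e : Fin n → ℕ} {j : Fin n} (hj : ¬ Even (e j)) :
    ∏ i, (if Even (e i) then (2:ℝ) else 0) = 0 :=
  Finset.prod_eq_zero (Finset.mem_univ j) (by simp [hj])

lemma circuit_structure {p : MvPolynomial (Fin n) ℝ} (hp : IsNNCircuit n p) :
    ∃ (A c : ℝ) (β : Fin n →₀ ℕ), 0 ≤ A ∧ 0 ≤ A + c ∧
      ((¬ ∀ i, Even (β i)) → 0 ≤ A - c) ∧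
      ∀ b : Fin n → Bool, MvPolynomial.eval (pt n b) p
        = A + c * ∏ i, pt n b i ^ (β i : ℕ) := by
  obtain ⟨⟨r, α, β, cf, c, lam, _, hcf, heven, _, _, _, _, hrep⟩, hnn⟩ := hp
  have hev : ∀ b : Fin n → Bool, MvPolynomial.eval (pt n b) p
      = (∑ j, cf j) + c * ∏ i, pt n b i ^ (β i : ℕ) := by
    intro b
    rw [hrep]
    simp only [map_add, map_sum, MvPolynomial.eval_monomial, Finsupp.prod_pow]
    congr 1
    refine Finset.sum_congr rfl fun j _ => ?_
    have h1 : ∏ i, pt n b i ^ (α j i : ℕ) = 1 := by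
      refine Finset.prod_eq_one fun i _ => ?_
      rw [pt_pow, if_pos (heven j i)]
    rw [h1, mul_one]
  have hone : ∏ i, pt n (fun _ => true) i ^ (β i : ℕ) = 1 := by
    refine Finset.prod_eq_one fun i _ => ?_
    simp [pt]
  refine ⟨∑ j, cf j, c, β, Finset.sum_nonneg fun j _ => (hcf j).le, ?_, ?_, hev⟩
  · have h := hnn (pt n (fun _ => true))
    rw [hev, hone, mul_one] at h
    exact h
  · intro hne
    push_neg at hne
    obtain ⟨j, hj⟩ := hne
    set b : Fin n → Bool := fun i => if i = j then false else true with hb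
    have hχ : ∏ i, pt n b i ^ (β i : ℕ) = -1 := by
      rw [Finset.prod_eq_single j]
      · have : pt n b j = -1 := by simp [pt, hb]
        rw [this, (Nat.not_even_iff_odd.mp hj).neg_one_pow]
      · intro i _ hij
        have : pt n b i = 1 := by simp [pt, hb, hij]
        rw [this, one_pow]
      · simp
    have h := hnn (pt n b)
    rw [hev, hχ] at h
    linarith

end NoPutinarAux

namespace NoPutinarAux

variable {n : ℕ}

lemma prod_single_pow (b : Fin n → Bool) (i₀ : Fin n) :
    ∏ i, pt n b i ^ (if i = i₀ then 1 else 0) = pt n b i₀ := by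
  rw [Finset.prod_eq_single i₀]
  · rw [if_pos rfl, pow_one]
  · intro i _ hij; rw [if_neg hij, pow_zero]
  · simp

lemma sum_expand (A c u v : ℝ) (β : Fin n →₀ ℕ) (i₀ : Fin n) :
    ∑ b : Fin n → Bool, (A + c * ∏ i, pt n b i ^ (β i : ℕ)) * (u + v * pt n b i₀)
      = 2 ^ n * (A * u) + c * u * (∏ i, (if Even (β i : ℕ) then (2:ℝ) else 0))
        + c * v * (∏ i, (if Even ((β i : ℕ) + if i = i₀ then 1 else 0) then (2:ℝ) else 0)) := by
  have hε : ∑ b : Fin n → Bool, pt n b i₀ = 0 := by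
    have h := sum_prod_pow (n := n) (fun i => if i = i₀ then 1 else 0)
    simp_rw [prod_single_pow] at h
    rw [h, Q_not_even (j := i₀) (by simp)]
  have hχ := sum_prod_pow (n := n) (fun i => (β i : ℕ))
  have hχε : ∑ b : Fin n → Bool, (∏ i, pt n b i ^ (β i : ℕ)) * pt n b i₀
      = ∏ i, (if Even ((β i : ℕ) + if i = i₀ then 1 else 0) then (2:ℝ) else 0) := by
    have h2 : ∀ b : Fin n → Bool, (∏ i, pt n b i ^ (β i : ℕ)) * pt n b i₀
        = ∏ i, pt n b i ^ ((β i : ℕ) + if i = i₀ then 1 else 0) := by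
      intro b
      rw [← prod_single_pow b i₀, ← Finset.prod_mul_distrib]
      exact Finset.prod_congr rfl fun i _ => (pow_add _ _ _).symm
    simp_rw [h2]
    exact sum_prod_pow _
  have key : ∀ b : Fin n → Bool,
      (A + c * ∏ i, pt n b i ^ (β i : ℕ)) * (u + v * pt n b i₀)
      = A * u + (A * v) * pt n b i₀ + (c * u) * (∏ i, pt n b i ^ (β i : ℕ))
        + (c * v) * ((∏ i, pt n b i ^ (β i : ℕ)) * pt n b i₀) := by
    intro b; ring
  simp_rw [key]
  rw [Finset.sum_add_distrib, Finset.sum_add_distrib, Finset.sum_add_distrib,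
    Finset.sum_const, ← Finset.mul_sum, ← Finset.mul_sum, ← Finset.mul_sum,
    hε, hχ, hχε, mul_zero, add_zero]
  have hcard : (Finset.univ : Finset (Fin n → Bool)).card = 2 ^ n := by
    simp [Fintype.card_fun]
  rw [hcard, nsmul_eq_mul]
  push_cast
  ring

end NoPutinarAux

namespace NoPutinarAux

open MvPolynomial

variable {n : ℕ}

lemma chi_one (β : Fin n →₀ ℕ) :
    ∏ i, pt n (fun _ => true) i ^ (β i : ℕ) = 1 :=
  Finset.prod_eq_one fun i _ => by simp [pt]

lemma circuit_h_ineq (hn : 3 ≤ n) {p h : MvPolynomial (Fin n) ℝ} (hp : IsNNCircuit n p)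
    (hh : h = 1 ∨ (∃ i, h = X i ^ 2 - 1 ∨ h = 1 - X i ^ 2) ∨
        (∃ i, ∃ c : ℝ, 0 ≤ c ∧ (h = 1 + C c + X i ∨ h = 1 + C c - X i))) :
    (2:ℝ) ^ (n - 2) * (eval (pt n fun _ => true) (p * h))
      ≤ ∑ b : Fin n → Bool, eval (pt n b) (p * h) := by
  obtain ⟨A, c, β, hA, hAc, hAmc, hev⟩ := circuit_structure hp
  have hK : (0:ℝ) < 2 ^ (n - 2) := by positivity
  have h4 : (2:ℝ) ^ n = 4 * 2 ^ (n - 2) := by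
    have hn2 : n - 2 + 2 = n := by omega
    rw [← hn2]
    simp only [Nat.add_sub_cancel]
    rw [pow_add]; ring
  rcases hh with rfl | ⟨i, hX2⟩ | ⟨i₀, c₀, hc₀, hpm⟩
  · -- h = 1
    simp only [mul_one]
    simp_rw [hev]
    rw [Finset.sum_add_distrib, Finset.sum_const, ← Finset.mul_sum,
      sum_prod_pow (fun i => (β i : ℕ)), chi_one, mul_one]
    have hcard : (Finset.univ : Finset (Fin n → Bool)).card = 2 ^ n := by
      simp [Fintype.card_fun]
    rw [hcard, nsmul_eq_mul]
    push_cast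
    by_cases hE : ∀ i, Even (β i : ℕ)
    · rw [Q_all_even _ hE]
      nlinarith
    · push_neg at hE
      obtain ⟨j, hj⟩ := hE
      have hmc := hAmc (by push_neg; exact ⟨j, hj⟩)
      rw [Q_not_even hj, mul_zero, add_zero, h4]
      nlinarith
  · -- h = X i ^ 2 - 1 or 1 - X i ^ 2
    have hz : ∀ b : Fin n → Bool, eval (pt n b) (p * h) = 0 := by
      intro b
      have hsq : pt n b i ^ 2 = 1 := by rw [pt_pow]; norm_num
      rcases hX2 with rfl | rfl <;> simp [hsq]
    simp only [hz, hz (fun _ => true), Finset.sum_const_zero, mul_zero]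
    exact le_refl 0
  · -- h = 1 + C c₀ ± X i₀
    have hv : ∃ v : ℝ, (v = 1 ∨ v = -1) ∧
        (∀ b : Fin n → Bool, eval (pt n b) (p * h)
          = (A + c * ∏ i, pt n b i ^ (β i : ℕ)) * ((1 + c₀) + v * pt n b i₀)) := by
      rcases hpm with rfl | rfl
      · exact ⟨1, Or.inl rfl, fun b => by
          rw [map_mul, hev b]; simp only [map_add, map_one, eval_C, eval_X]; ring⟩
      · exact ⟨-1, Or.inr rfl, fun b => by
          rw [map_mul, hev b]; simp only [map_sub, map_add, map_one, eval_C, eval_X]; ring⟩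
    obtain ⟨v, hv1, hveval⟩ := hv
    simp_rw [hveval]
    rw [sum_expand]
    rw [chi_one, mul_one]
    have hpt1 : pt n (fun _ => true) i₀ = 1 := by simp [pt]
    rw [hpt1]
    set u : ℝ := 1 + c₀ with hu
    have hu1 : (1:ℝ) ≤ u := by simp [hu]; linarith
    by_cases hE : ∀ i, Even (β i : ℕ)
    · rw [Q_all_even _ hE,
        Q_not_even (j := i₀) (by simp [Nat.even_add_one, hE i₀]), mul_zero, add_zero, h4]
      have hcore : (A + c) * (u + v * 1) ≤ 4 * (A * u) + 4 * (c * u) := by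
        rcases hv1 with rfl | rfl <;> nlinarith [mul_nonneg hAc (by linarith : (0:ℝ) ≤ u - 1)]
      nlinarith [mul_le_mul_of_nonneg_left hcore hK.le]
    · have hmc := hAmc hE
      push_neg at hE
      obtain ⟨j, hj⟩ := hE
      rw [Q_not_even hj, mul_zero, add_zero]
      by_cases hO : ∀ i, Even ((β i : ℕ) + if i = i₀ then 1 else 0)
      · rw [Q_all_even _ hO, h4]
        have hcore : (A + c) * (u + v * 1) ≤ 4 * (A * u) + 4 * (c * v) := by
          rcases hv1 with rfl | rfl <;>
            nlinarith [mul_nonneg (by linarith : (0:ℝ) ≤ u - 1) hmc,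
              mul_nonneg (by linarith : (0:ℝ) ≤ u - 1) hA]
        nlinarith [mul_le_mul_of_nonneg_left hcore hK.le]
      · push_neg at hO
        obtain ⟨j', hj'⟩ := hO
        rw [Q_not_even hj', mul_zero, add_zero, h4]
        have hcore : (A + c) * (u + v * 1) ≤ 4 * (A * u) := by
          rcases hv1 with rfl | rfl <;>
            nlinarith [mul_nonneg (by linarith : (0:ℝ) ≤ u - 1) hmc,
              mul_nonneg (by linarith : (0:ℝ) ≤ u - 1) hA,
              mul_nonneg (by linarith : (0:ℝ) ≤ u + 1) hmc]
        nlinarith [mul_le_mul_of_nonneg_left hcore hK.le]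

end NoPutinarAux

namespace NoPutinarAux

open MvPolynomial

variable {n : ℕ}

lemma sonc_h_ineq (hn : 3 ≤ n) {D : ℕ} {s h : MvPolynomial (Fin n) ℝ}
    (hs : InSONCCone n D s)
    (hh : h = 1 ∨ (∃ i, h = X i ^ 2 - 1 ∨ h = 1 - X i ^ 2) ∨
        (∃ i, ∃ c : ℝ, 0 ≤ c ∧ (h = 1 + C c + X i ∨ h = 1 + C c - X i))) :
    (2:ℝ) ^ (n - 2) * (eval (pt n fun _ => true) (s * h))
      ≤ ∑ b : Fin n → Bool, eval (pt n b) (s * h) := by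
  obtain ⟨-, m, μ, q, hμ, hq, hsdef⟩ := hs
  have expand : ∀ x : Fin n → ℝ, eval x (s * h) = ∑ i, μ i * eval x (q i * h) := by
    intro x
    rw [hsdef, Finset.sum_mul, map_sum]
    refine Finset.sum_congr rfl fun i _ => ?_
    rw [mul_assoc, map_mul, eval_C]
  simp_rw [expand]
  rw [Finset.mul_sum, Finset.sum_comm]
  refine Finset.sum_le_sum fun i _ => ?_
  calc (2:ℝ) ^ (n - 2) * (μ i * eval (pt n fun _ => true) (q i * h))
      = μ i * ((2:ℝ) ^ (n - 2) * eval (pt n fun _ => true) (q i * h)) := by ring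
    _ ≤ μ i * ∑ b : Fin n → Bool, eval (pt n b) (q i * h) :=
        mul_le_mul_of_nonneg_left (circuit_h_ineq hn (hq i).1 hh) (hμ i)
    _ = ∑ b : Fin n → Bool, μ i * eval (pt n b) (q i * h) := Finset.mul_sum _ _ _

lemma eval_fA_pt (a : ℝ) (b : Fin n → Bool) :
    eval (pt n b) (fA n a) = (if b = fun _ => true then a - 1 else 0) + 1 := by
  rw [fA]
  simp only [map_add, map_mul, map_one, eval_C, map_prod, eval_X]
  congr 1
  by_cases hb : b = fun _ => true
  · subst hb
    rw [if_pos rfl]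
    have h1 : ∏ i, ((1/2 : ℝ) * (pt n (fun _ => true) i + 1)) = 1 :=
      Finset.prod_eq_one fun i _ => by norm_num [pt]
    rw [h1, mul_one]
  · rw [if_neg hb]
    obtain ⟨j, hj⟩ : ∃ j, b j ≠ true := by
      by_contra hc
      push_neg at hc
      exact hb (funext fun i => hc i)
    have h0 : ∏ i, ((1/2 : ℝ) * (pt n b i + 1)) = 0 :=
      Finset.prod_eq_zero (Finset.mem_univ j) (by simp [pt, hj])
    rw [h0, mul_zero]

lemma sum_eval_fA (a : ℝ) :
    ∑ b : Fin n → Bool, eval (pt n b) (fA n a) = (a - 1) + 2 ^ n := by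
  simp_rw [eval_fA_pt]
  rw [Finset.sum_add_distrib, Finset.sum_ite_eq' Finset.univ (fun _ => true)
    (fun _ => a - 1), if_pos (Finset.mem_univ _), Finset.sum_const]
  have hcard : (Finset.univ : Finset (Fin n → Bool)).card = 2 ^ n := by
    simp [Fintype.card_fun]
  rw [hcard, nsmul_eq_mul]
  push_cast
  ring

end NoPutinarAux
/-- For `n ≥ 3` and `a > (2ⁿ − 1)/(2^{n−2} − 1)`, for every
`d ∈ ℕ` the polynomial `f_a` does not belong to `S_d`: it admits no finite
representation `f_a = Σ s·h` with `s ∈ C_{n,2d}` and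
`h ∈ {1} ∪ {x_i² − 1, 1 − x_i²} ∪ {1 + c ± x_i : c ≥ 0}`. -/
theorem no_putinar_representation
    (n : ℕ) (hn : 3 ≤ n) (a : ℝ)
    (ha : ((2 : ℝ) ^ n - 1) / ((2 : ℝ) ^ (n - 2) - 1) < a) (d : ℕ) :
    ¬ ∃ (N : ℕ) (s h : Fin N → MvPolynomial (Fin n) ℝ),
      (∀ k, InSONCCone n (2 * d) (s k)) ∧
      (∀ k, h k = 1 ∨
        (∃ i, h k = X i ^ 2 - 1 ∨ h k = 1 - X i ^ 2) ∨
        (∃ i, ∃ c : ℝ, 0 ≤ c ∧ (h k = 1 + C c + X i ∨ h k = 1 + C c - X i))) ∧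
      fA n a = ∑ k, s k * h k := by
  rintro ⟨N, s, h, hS, hH, hrep⟩
  classical
  open NoPutinarAux in
  have hK1 : (1:ℝ) < 2 ^ (n - 2) := by
    apply one_lt_pow₀ (by norm_num) (by omega)
  have h4 : (2:ℝ) ^ n = 4 * 2 ^ (n - 2) := by
    have hn2 : n - 2 + 2 = n := by omega
    rw [← hn2]
    simp only [Nat.add_sub_cancel]
    rw [pow_add]; ring
  have hsum : (2:ℝ) ^ (n - 2) * eval (NoPutinarAux.pt n fun _ => true) (fA n a)
      ≤ ∑ b : Fin n → Bool, eval (NoPutinarAux.pt n b) (fA n a) := by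
    rw [hrep]
    simp_rw [map_sum]
    rw [Finset.mul_sum, Finset.sum_comm]
    exact Finset.sum_le_sum fun k _ => NoPutinarAux.sonc_h_ineq hn (hS k) (hH k)
  rw [NoPutinarAux.sum_eval_fA, NoPutinarAux.eval_fA_pt, if_pos rfl, h4] at hsum
  rw [h4, div_lt_iff₀ (by linarith : (0:ℝ) < 2 ^ (n - 2) - 1)] at ha
  nlinarith [hsum, ha]
end
end

section
/- Let n ≥ 3 and a ∈ ℝ. Suppose there exist a SONC s₀, finitely many SONCs s₁,…,s_K, and for each k ∈ [K] a constant c_k ≥ 0, a sign σ_k ∈ {−1,1}, and an index i_k ∈ [n] with ℓ_k(x) = 1 + c_k + σ_k x_{i_k}, such that f_a(x) = s₀(x) + Σ_{k=1}^{K} s_k(x)ℓ_k(x) for every x ∈ {−1,1}ⁿ. Then a ≤ (2ⁿ − 1)/(2^{n−2} − 1). -/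
open MvPolynomial Finset
open scoped Classical

noncomputable section

/-!
At a vertex of `{−1,1}ⁿ` every even monomial equals `1`, so a circuit polynomial takes only the
two values `Σ cⱼ ± c`, according to the sign of `x^β` there. Flipping a coordinate `j ≠ i` with
`βⱼ` odd reverses that sign, so at least `2^{n−2}` vertices of the facet `{xᵢ = 1}` share the
value of the circuit at `𝟙`. Each multiplier `ℓ_k` is nonnegative on the cube and constant on the
facet `{x_{i_k} = 1}`, hence every product `g` of a nonnegative circuit with `ℓ_k` satisfies
`2^{n−2} g(𝟙) ≤ Σ_x g(x)`; by linearity so does every SONC times `ℓ_k`. Summing the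
representation of `f_a` gives `2^{n−2} a ≤ Σ_x f_a(x) = a + 2ⁿ − 1`.
-/

lemma two_mul_card_filter_of_involutive {α : Type*} {s : Finset α} {f : α → α}
    (hf : Function.Involutive f) (hs : ∀ x ∈ s, f x ∈ s) {p : α → Prop} [DecidablePred p]
    (hp : ∀ x ∈ s, p (f x) ↔ ¬ p x) :
    2 * #(s.filter p) = #s := by
  have hswap : #(s.filter p) = #(s.filter (¬ p ·)) := by
    refine card_nbij' f f (fun x hx => ?_) (fun x hx => ?_) (fun x _ => hf x) (fun x _ => hf x)
    all_goals
      simp only [mem_coe, mem_filter] at hx ⊢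
      exact ⟨hs x hx.1, by simpa [hp x hx.1] using hx.2⟩
  rw [two_mul]
  nth_rw 2 [hswap]
  exact card_filter_add_card_filter_not p

def flipAt {n : ℕ} (j : Fin n) (ε : Fin n → Bool) : Fin n → Bool :=
  Function.update ε j (!ε j)

lemma flipAt_apply_self {n : ℕ} (j : Fin n) (ε : Fin n → Bool) : flipAt j ε j = !ε j :=
  Function.update_self ..

lemma flipAt_apply_of_ne {n : ℕ} {j k : Fin n} (h : k ≠ j) (ε : Fin n → Bool) :
    flipAt j ε k = ε k :=
  Function.update_of_ne h ..

lemma flipAt_involutive {n : ℕ} (j : Fin n) : Function.Involutive (flipAt j) := by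
  intro ε
  funext k
  by_cases h : k = j
  · subst h; simp [flipAt_apply_self]
  · simp [flipAt_apply_of_ne h]

lemma card_filter_apply_eq_true {n : ℕ} (i : Fin n) :
    #(univ.filter fun ε : Fin n → Bool => ε i = true) = 2 ^ (n - 1) := by
  have h := two_mul_card_filter_of_involutive (s := univ) (flipAt_involutive i)
    (fun _ _ => mem_univ _) (p := fun ε => ε i = true) (fun ε _ => by simp [flipAt_apply_self])
  rw [card_univ, Fintype.card_fun, Fintype.card_bool, Fintype.card_fin] at h
  rw [← Nat.mul_left_cancel_iff two_pos, h, ← pow_succ', Nat.sub_add_cancel i.pos]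

lemma bvtx_apply_of_eq_true {n : ℕ} {ε : Fin n → Bool} {j : Fin n} (h : ε j = true) :
    bvtx n ε j = 1 := by
  simp [bvtx, h]

lemma bvtx_pow_of_even {n : ℕ} (ε : Fin n → Bool) (j : Fin n) {k : ℕ} (hk : Even k) :
    bvtx n ε j ^ k = 1 := by
  unfold bvtx
  split_ifs
  exacts [one_pow k, hk.neg_one_pow]

lemma bvtx_flipAt_self {n : ℕ} (ε : Fin n → Bool) (j : Fin n) :
    bvtx n (flipAt j ε) j = -bvtx n ε j := by
  cases h : ε j <;> simp [bvtx, flipAt_apply_self, h]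

def vertexSign (n : ℕ) (β : Fin n →₀ ℕ) (ε : Fin n → Bool) : ℝ :=
  ∏ j, bvtx n ε j ^ β j

lemma vertexSign_true {n : ℕ} (β : Fin n →₀ ℕ) : vertexSign n β (fun _ => true) = 1 :=
  prod_eq_one fun j _ => by rw [bvtx_apply_of_eq_true rfl, one_pow]

lemma vertexSign_eq_one_or {n : ℕ} (β : Fin n →₀ ℕ) (ε : Fin n → Bool) :
    vertexSign n β ε = 1 ∨ vertexSign n β ε = -1 := by
  refine prod_induction _ (fun x => x = 1 ∨ x = -1) ?_ (Or.inl rfl) fun j _ => ?_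
  · rintro x y (rfl | rfl) (rfl | rfl) <;> norm_num
  · unfold bvtx
    split_ifs
    · exact Or.inl (one_pow _)
    · exact (β j).even_or_odd.imp Even.neg_one_pow Odd.neg_one_pow

lemma vertexSign_flipAt {n : ℕ} {β : Fin n →₀ ℕ} {j : Fin n} (hj : Odd (β j))
    (ε : Fin n → Bool) : vertexSign n β (flipAt j ε) = -vertexSign n β ε := by
  unfold vertexSign
  rw [← mul_prod_erase _ _ (mem_univ j), ← mul_prod_erase _ _ (mem_univ j),
    bvtx_flipAt_self, hj.neg_pow, neg_mul]
  congr 2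
  refine prod_congr rfl fun k hk => ?_
  simp only [bvtx, flipAt_apply_of_ne (ne_of_mem_erase hk)]

lemma vertexSign_eq_one_of_even {n : ℕ} {β : Fin n →₀ ℕ} {i : Fin n}
    (hβ : ∀ j, j ≠ i → Even (β j)) {ε : Fin n → Bool} (hε : ε i = true) :
    vertexSign n β ε = 1 := by
  refine prod_eq_one fun j _ => ?_
  by_cases hj : j = i
  · rw [hj, bvtx_apply_of_eq_true hε, one_pow]
  · exact bvtx_pow_of_even ε j (hβ j hj)

lemma two_pow_sub_two_le_card_filter_vertexSign {n : ℕ} (β : Fin n →₀ ℕ) (i : Fin n) :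
    2 ^ (n - 2) ≤ #(univ.filter fun ε : Fin n → Bool => ε i = true ∧ vertexSign n β ε = 1) := by
  rw [← filter_filter]
  by_cases hβ : ∃ j, j ≠ i ∧ Odd (β j)
  · obtain ⟨j, hji, hj⟩ := hβ
    have h := two_mul_card_filter_of_involutive (s := univ.filter fun ε => ε i = true)
      (flipAt_involutive j) (fun ε hε => by simpa [flipAt_apply_of_ne hji.symm] using hε)
      (p := fun ε => vertexSign n β ε = 1) fun ε _ => by
        rcases vertexSign_eq_one_or β ε with h | h <;> norm_num [vertexSign_flipAt hj, h]
    rw [card_filter_apply_eq_true, show n - 1 = n - 2 + 1 by omega, pow_succ'] at h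
    exact (Nat.eq_of_mul_eq_mul_left two_pos h).ge
  · push Not at hβ
    rw [filter_true_of_mem fun ε hε => vertexSign_eq_one_of_even
      (fun j hj => Nat.not_odd_iff_even.mp (hβ j hj)) (mem_filter.mp hε).2,
      card_filter_apply_eq_true]
    exact Nat.pow_le_pow_right two_pos (by omega)

lemma IsCircuitPoly.exists_eval_bvtx {n : ℕ} {p : MvPolynomial (Fin n) ℝ}
    (hp : IsCircuitPoly n p) :
    ∃ (S c : ℝ) (β : Fin n →₀ ℕ), ∀ ε, eval (bvtx n ε) p = S + c * vertexSign n β ε := by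
  obtain ⟨r, α, β, cf, c, -, -, -, hα, -, -, -, -, rfl⟩ := hp
  refine ⟨∑ j, cf j, c, β, fun ε => ?_⟩
  simp only [map_add, map_sum, eval_monomial, Finsupp.prod_fintype _ _ fun _ => pow_zero _,
    vertexSign]
  congr 1
  exact sum_congr rfl fun j _ => by
    rw [prod_eq_one fun i _ => bvtx_pow_of_even ε i (hα j i), mul_one]

lemma IsNNCircuit.two_pow_mul_le_sum {n : ℕ} {p : MvPolynomial (Fin n) ℝ} (hp : IsNNCircuit n p)
    {w : (Fin n → Bool) → ℝ} (hw : ∀ ε, 0 ≤ w ε) {i : Fin n}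
    (hwi : ∀ ε, ε i = true → w ε = w fun _ => true) :
    2 ^ (n - 2) * (eval (bvtx n fun _ => true) p * w fun _ => true) ≤
      ∑ ε, eval (bvtx n ε) p * w ε := by
  obtain ⟨S, c, β, hev⟩ := hp.1.exists_eval_bvtx
  set G := univ.filter fun ε : Fin n → Bool => ε i = true ∧ vertexSign n β ε = 1
  have hG : ∀ ε ∈ G,
      eval (bvtx n ε) p * w ε = eval (bvtx n fun _ => true) p * w fun _ => true := by
    intro ε hε
    obtain ⟨hεi, hεβ⟩ := (mem_filter.mp hε).2
    rw [hev, hev, hεβ, vertexSign_true, hwi ε hεi]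
  calc 2 ^ (n - 2) * (eval (bvtx n fun _ => true) p * w fun _ => true)
      ≤ #G * (eval (bvtx n fun _ => true) p * w fun _ => true) := by
        gcongr
        · exact mul_nonneg (hp.2 _) (hw _)
        · exact_mod_cast two_pow_sub_two_le_card_filter_vertexSign β i
    _ = ∑ ε ∈ G, eval (bvtx n ε) p * w ε := by rw [sum_congr rfl hG, sum_const, nsmul_eq_mul]
    _ ≤ ∑ ε, eval (bvtx n ε) p * w ε :=
        sum_le_sum_of_subset_of_nonneg (subset_univ G) fun ε _ _ => mul_nonneg (hp.2 _) (hw ε)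

lemma IsSONC.linearMap_nonneg {n : ℕ} {q : MvPolynomial (Fin n) ℝ} (hq : IsSONC n q)
    (L : MvPolynomial (Fin n) ℝ →ₗ[ℝ] ℝ) (hL : ∀ p, IsNNCircuit n p → 0 ≤ L p) : 0 ≤ L q := by
  obtain ⟨k, μ, p, hμ, hp, rfl⟩ := hq
  simp only [map_sum, C_mul', map_smul, smul_eq_mul]
  exact sum_nonneg fun t _ => mul_nonneg (hμ t) (hL _ (hp t))

lemma IsSONC.two_pow_mul_le_sum {n : ℕ} {q : MvPolynomial (Fin n) ℝ} (hq : IsSONC n q)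
    {w : (Fin n → Bool) → ℝ} (hw : ∀ ε, 0 ≤ w ε) {i : Fin n}
    (hwi : ∀ ε, ε i = true → w ε = w fun _ => true) :
    2 ^ (n - 2) * (eval (bvtx n fun _ => true) q * w fun _ => true) ≤
      ∑ ε, eval (bvtx n ε) q * w ε := by
  let L : MvPolynomial (Fin n) ℝ →ₗ[ℝ] ℝ :=
    ∑ ε, w ε • (aeval (bvtx n ε)).toLinearMap -
      (2 ^ (n - 2) * w fun _ => true) • (aeval (bvtx n fun _ => true)).toLinearMap
  have hL : ∀ p, L p = ∑ ε, eval (bvtx n ε) p * w ε -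
      2 ^ (n - 2) * (eval (bvtx n fun _ => true) p * w fun _ => true) := by
    intro p
    simp only [L, LinearMap.sub_apply, LinearMap.coe_sum, LinearMap.coe_smul, Finset.sum_apply,
      Pi.smul_apply, LinearMap.smul_apply, AlgHom.toLinearMap_apply, aeval_eq_eval, smul_eq_mul,
      mul_comm (w _)]
    ring
  have h := hq.linearMap_nonneg L fun p hp => by
    rw [hL]
    linarith [hp.two_pow_mul_le_sum hw hwi]
  rw [hL] at h
  linarith

lemma eval_bvtx_fA (n : ℕ) (a : ℝ) (ε : Fin n → Bool) :
    eval (bvtx n ε) (fA n a) = (a - 1) * (if ε = fun _ => true then 1 else 0) + 1 := by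
  have hfactor : ∀ i, 1 / 2 * (bvtx n ε i + 1) = if ε i = true then 1 else 0 := by
    intro i
    by_cases h : ε i <;> norm_num [bvtx, h]
  simp only [fA, map_add, map_mul, map_prod, eval_C, eval_X, map_one, hfactor,
    Fintype.prod_boole, funext_iff]
  congr

lemma sum_eval_bvtx_fA (n : ℕ) (a : ℝ) : ∑ ε, eval (bvtx n ε) (fA n a) = a - 1 + 2 ^ n := by
  simp [eval_bvtx_fA, sum_add_distrib]

/-- For `n ≥ 3`, if `f_a = s₀ + Σ_k s_k ℓ_k` holds at every point
of `{−1,1}ⁿ`, where `s₀, s₁,…,s_K` are SONCs and `ℓ_k(x) = 1 + c_k + σ_k x_{i_k}`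
with `c_k ≥ 0` and `σ_k ∈ {−1,1}`, then `a ≤ (2ⁿ − 1)/(2^{n−2} − 1)`. -/
theorem putinar_representation_bounds_a
    (n : ℕ) (hn : 3 ≤ n) (a : ℝ) (K : ℕ)
    (s₀ : MvPolynomial (Fin n) ℝ) (hs₀ : IsSONC n s₀)
    (s : Fin K → MvPolynomial (Fin n) ℝ) (hs : ∀ k, IsSONC n (s k))
    (c : Fin K → ℝ) (hc : ∀ k, 0 ≤ c k)
    (σ : Fin K → ℝ) (hσ : ∀ k, σ k = 1 ∨ σ k = -1)
    (idx : Fin K → Fin n)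
    (heq : ∀ ε : Fin n → Bool,
      eval (bvtx n ε) (fA n a) =
        eval (bvtx n ε) s₀ +
          ∑ k, eval (bvtx n ε) (s k) * (1 + c k + σ k * bvtx n ε (idx k))) :
    a ≤ ((2 : ℝ) ^ n - 1) / ((2 : ℝ) ^ (n - 2) - 1) := by
  have hℓ_nonneg : ∀ k ε, 0 ≤ 1 + c k + σ k * bvtx n ε (idx k) := by
    intro k ε
    have : |σ k * bvtx n ε (idx k)| = 1 := by
      rcases hσ k with h | h <;> unfold bvtx <;> split_ifs <;> simp [h]
    linarith [hc k, neg_abs_le (σ k * bvtx n ε (idx k))]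
  have hbound : 2 ^ (n - 2) * eval (bvtx n fun _ => true) (fA n a) ≤
      ∑ ε, eval (bvtx n ε) (fA n a) := by
    simp_rw [heq]
    rw [mul_add, mul_sum, sum_add_distrib, sum_comm (s := univ) (t := univ)]
    gcongr with k
    · simpa using hs₀.two_pow_mul_le_sum (w := 1) (i := ⟨0, by omega⟩) (fun _ => zero_le_one)
        fun _ _ => rfl
    · exact (hs k).two_pow_mul_le_sum (hℓ_nonneg k) fun ε h => by
        rw [bvtx_apply_of_eq_true h, bvtx_apply_of_eq_true rfl]
  have hM : (0 : ℝ) < 2 ^ (n - 2) - 1 := by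
    linarith [one_lt_pow₀ (one_lt_two (α := ℝ)) (by omega : n - 2 ≠ 0)]
  rw [sum_eval_bvtx_fA, eval_bvtx_fA, if_pos rfl] at hbound
  rw [le_div_iff₀ hM]
  linarith
end
end
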